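/- arXiv:1906.00030 — 8 statements merged into one kernel-verified Lean document; each statement's English description precedes it below -/
import Mathlib

section
/- Let c : U × V → ℝ be a smooth nondegenerate cost on open sets U, V ⊂ ℝⁿ, f : U → V a smooth diffeomorphism onto its range with graph G arising from a c-concave potential, and D the c-divergence. In the primal coordinate ξ on G, the information-geometric metric defined by g_{ij}(ξ) = −∂_{ξⁱ}∂_{ξ'ʲ} D[ξ : ξ']|_{ξ=ξ'} satisfies g_{ij}(ξ) = − c_{i:m̄}(ξ, f(ξ)) · ∂f^{m̄}/∂ξʲ, where c_{i:m̄} are the mixed second partials of c. -/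
/-- Partial derivative of `F(ξ, ξ')` in the coordinate direction `ξⁱ` (first slot). -/
noncomputable def pd1 {n : ℕ} (F : (Fin n → ℝ) → (Fin n → ℝ) → ℝ) (i : Fin n) :
    (Fin n → ℝ) → (Fin n → ℝ) → ℝ :=
  fun x y => fderiv ℝ (fun x' => F x' y) x (Pi.single i 1)

/-- Partial derivative of `F(ξ, ξ')` in a coordinate direction of the second slot. -/
noncomputable def pd2 {n : ℕ} (F : (Fin n → ℝ) → (Fin n → ℝ) → ℝ) (j : Fin n) :
    (Fin n → ℝ) → (Fin n → ℝ) → ℝ :=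
  fun x y => fderiv ℝ (fun y' => F x y') y (Pi.single j 1)

/-- In the primal coordinate, the Riemannian metric of the c-divergence,
`g_{ij}(ξ) = −∂_{ξⁱ}∂_{ξ'ʲ} D[ξ : ξ']|_{ξ=ξ'}`, equals
`−c_{i:m̄}(ξ, f(ξ)) ∂f^{m̄}/∂ξʲ`. -/
theorem c_divergence_metric_formula {n : ℕ}
    (U V : Set (Fin n → ℝ)) (hU : IsOpen U) (hV : IsOpen V)
    (c : (Fin n → ℝ) → (Fin n → ℝ) → ℝ)
    (hc : ContDiffOn ℝ (⊤ : ℕ∞) (fun z : (Fin n → ℝ) × (Fin n → ℝ) => c z.1 z.2) (U ×ˢ V))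
    (f : (Fin n → ℝ) → (Fin n → ℝ))
    (hf : ContDiffOn ℝ (⊤ : ℕ∞) f U) (hfUV : Set.MapsTo f U V) (hfinj : Set.InjOn f U)
    (φ ψ : (Fin n → ℝ) → ℝ)
    (hφ : ContDiffOn ℝ (⊤ : ℕ∞) φ U)
    (hpot : ∀ ξ ∈ U, φ ξ + ψ (f ξ) = c ξ (f ξ))
    (hfoc : ∀ ξ ∈ U, ∀ i : Fin n,
      pd1 (fun x x' => c x (f x') - φ x) i ξ ξ = 0)
    (D : (Fin n → ℝ) → (Fin n → ℝ) → ℝ)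
    (hD : ∀ ξ ξ', D ξ ξ' = c ξ (f ξ') - φ ξ - ψ (f ξ')) :
    ∀ ξ ∈ U, ∀ i j : Fin n,
      -(pd2 (pd1 D i) j ξ ξ)
        = -∑ m, pd2 (pd1 c i) m ξ (f ξ) * fderiv ℝ f ξ (Pi.single j 1) m := by
  intro ξ hξ i j
  set C : ((Fin n → ℝ) × (Fin n → ℝ)) → ℝ := fun z => c z.1 z.2 with hCdef
  have hUV : IsOpen (U ×ˢ V) := hU.prod hV
  -- differentiability of C at points of U ×ˢ V
  have hCdiff : ∀ z ∈ U ×ˢ V, DifferentiableAt ℝ C z := fun z hz =>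
    (hc.contDiffAt (hUV.mem_nhds hz)).differentiableAt (by simp)
  -- the total derivative of C is differentiable on U ×ˢ V
  have hL : ContDiffOn ℝ 1 (fun z => fderiv ℝ C z) (U ×ˢ V) := by
    have := hc.fderiv_of_isOpen hUV (m := 1) (by exact WithTop.coe_le_coe.mpr le_top)
    exact this
  have hLdiff : ∀ z ∈ U ×ˢ V, DifferentiableAt ℝ (fun z => fderiv ℝ C z) z := by
    intro z hz
    exact ((hL.differentiableOn one_ne_zero).differentiableAt (hUV.mem_nhds hz))
  -- key : partial derivative in the first slot equals the total derivative at (v, 0)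
  have key1 : ∀ x v, (x, v) ∈ U ×ˢ V →
      fderiv ℝ (fun x' => c x' v) x = (fderiv ℝ C (x, v)).comp
        ((ContinuousLinearMap.id ℝ (Fin n → ℝ)).prod 0) := by
    intro x v hz
    have h1 : HasFDerivAt (fun x' : (Fin n → ℝ) => (x', v))
        ((ContinuousLinearMap.id ℝ (Fin n → ℝ)).prod 0) x :=
      HasFDerivAt.prodMk (hasFDerivAt_id x) (hasFDerivAt_const v x)
    have h2 : HasFDerivAt C (fderiv ℝ C (x, v)) (x, v) :=
      (hCdiff _ hz).hasFDerivAt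
    exact (h2.comp x h1).fderiv
  have key2 : ∀ x v, (x, v) ∈ U ×ˢ V →
      fderiv ℝ (fun v' => c x v') v = (fderiv ℝ C (x, v)).comp
        ((0 : (Fin n → ℝ) →L[ℝ] (Fin n → ℝ)).prod (ContinuousLinearMap.id ℝ (Fin n → ℝ))) := by
    intro x v hz
    have h1 : HasFDerivAt (fun v' : (Fin n → ℝ) => (x, v'))
        ((0 : (Fin n → ℝ) →L[ℝ] (Fin n → ℝ)).prod (ContinuousLinearMap.id ℝ (Fin n → ℝ))) v :=
      HasFDerivAt.prodMk (hasFDerivAt_const x v) (hasFDerivAt_id v)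
    have h2 : HasFDerivAt C (fderiv ℝ C (x, v)) (x, v) :=
      (hCdiff _ hz).hasFDerivAt
    exact (h2.comp v h1).fderiv
  -- G v = ∂_{ξⁱ} c (ξ, v)
  set G : (Fin n → ℝ) → ℝ := fun v => fderiv ℝ C (ξ, v) (Pi.single i 1, 0) with hGdef
  have hξfξ : (ξ, f ξ) ∈ U ×ˢ V := ⟨hξ, hfUV hξ⟩
  have hGdiff : DifferentiableAt ℝ G (f ξ) := by
    have h1 : DifferentiableAt ℝ (fun v : (Fin n → ℝ) => (ξ, v)) (f ξ) :=
      (differentiableAt_const ξ).prodMk differentiableAt_id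
    have h2 : DifferentiableAt ℝ (fun v : (Fin n → ℝ) => fderiv ℝ C (ξ, v)) (f ξ) :=
      (hLdiff _ hξfξ).comp (f ξ) h1
    exact (ContinuousLinearMap.apply ℝ ℝ (Pi.single i 1, (0 : Fin n → ℝ))).differentiableAt.comp
      (f ξ) h2
  have hfdiff : DifferentiableAt ℝ f ξ :=
    (hf.contDiffAt (hU.mem_nhds hξ)).differentiableAt (by simp)
  have hφdiff : DifferentiableAt ℝ φ ξ :=
    (hφ.contDiffAt (hU.mem_nhds hξ)).differentiableAt (by simp)
  -- pd1 c i agrees with G on V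
  have hGeq : ∀ v ∈ V, pd1 c i ξ v = G v := by
    intro v hv
    simp only [pd1, hGdef]
    rw [key1 ξ v ⟨hξ, hv⟩]
    simp
  -- Step B : pd1 D i ξ · eventually equals G ∘ f minus a constant
  have hB : (fun y => pd1 D i ξ y) =ᶠ[nhds ξ]
      (fun y => G (f y) - fderiv ℝ φ ξ (Pi.single i 1)) := by
    filter_upwards [hU.mem_nhds hξ] with y hy
    have hfy : f y ∈ V := hfUV hy
    have hcy : DifferentiableAt ℝ (fun x => c x (f y)) ξ := by
      have h1 : DifferentiableAt ℝ (fun x : (Fin n → ℝ) => (x, f y)) ξ :=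
        differentiableAt_id.prodMk (differentiableAt_const _)
      exact (hCdiff _ ⟨hξ, hfy⟩).comp ξ h1
    have : pd1 D i ξ y
        = fderiv ℝ (fun x => c x (f y) - φ x - ψ (f y)) ξ (Pi.single i 1) := by
      simp only [pd1]
      congr 1
      apply Filter.EventuallyEq.fderiv_eq
      filter_upwards with x
      rw [hD]
    rw [this, fderiv_sub_const, fderiv_fun_sub hcy hφdiff]
    simp only [ContinuousLinearMap.sub_apply]
    congr 1
    have := hGeq (f y) hfy
    simpa [pd1] using this
  -- Step A + C : compute the second mixed partial of D
  have hA : pd2 (pd1 D i) j ξ ξ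
      = fderiv ℝ (fun y => G (f y)) ξ (Pi.single j 1) := by
    simp only [pd2]
    rw [hB.fderiv_eq, fderiv_sub_const]
  have hchain : fderiv ℝ (fun y => G (f y)) ξ (Pi.single j 1)
      = fderiv ℝ G (f ξ) (fderiv ℝ f ξ (Pi.single j 1)) := by
    rw [show (fun y => G (f y)) = G ∘ f from rfl, fderiv_comp ξ hGdiff hfdiff]
    simp
  -- Step D : pd2 (pd1 c i) m ξ (f ξ) = fderiv G (f ξ) e_m
  have hDm : ∀ m : Fin n, pd2 (pd1 c i) m ξ (f ξ)
      = fderiv ℝ G (f ξ) (Pi.single m 1) := by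
    intro m
    simp only [pd2]
    congr 1
    apply Filter.EventuallyEq.fderiv_eq
    filter_upwards [hV.mem_nhds (hfUV hξ)] with v hv
    exact hGeq v hv
  -- Step E : expand the directional derivative along the basis
  set w : (Fin n → ℝ) := fderiv ℝ f ξ (Pi.single j 1) with hw
  have hsum : fderiv ℝ G (f ξ) w
      = ∑ m, fderiv ℝ G (f ξ) (Pi.single m 1) * w m := by
    have hwe : w = ∑ m, w m • (Pi.single m 1 : Fin n → ℝ) := by
      funext k
      rw [Finset.sum_apply]
      simp [Pi.single_apply, mul_comm]
    conv_lhs => rw [hwe]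
    rw [map_sum]
    refine Finset.sum_congr rfl fun m _ => ?_
    rw [map_smul]
    simp [mul_comm]
  rw [hA, hchain, hsum]
  congr 1
  exact Finset.sum_congr rfl fun m _ => by rw [hDm m, mul_comm]
end

section
/- With the same setup, the primal Christoffel symbols of the c-divergence in primal coordinates, Γ_{ijk}(ξ) = −∂_{ξⁱ}∂_{ξʲ}∂_{ξ'ᵏ} D[ξ : ξ']|_{ξ=ξ'}, satisfy Γ_{ijk}(ξ) = − c_{ij:m̄}(ξ, f(ξ)) · ∂f^{m̄}/∂ξᵏ, and consequently Γ_{ij}^k(ξ) := Γ_{ijm} g^{mk} = c_{ij:m̄}(ξ, f(ξ)) c^{m̄:k}(ξ, f(ξ)). -/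
open Filter

section aux
variable {n : ℕ} {U V : Set (Fin n → ℝ)}

lemma aux_diff {G : (Fin n → ℝ) × (Fin n → ℝ) → ℝ} (hU : IsOpen U) (hV : IsOpen V)
    (hG : ContDiffOn ℝ (⊤ : ℕ∞) G (U ×ˢ V)) {x y : Fin n → ℝ} (hx : x ∈ U) (hy : y ∈ V) :
    DifferentiableAt ℝ G (x, y) :=
  (hG.contDiffAt (((hU.prod hV)).mem_nhds ⟨hx, hy⟩)).differentiableAt (by simp)

lemma aux_pd1 {G : (Fin n → ℝ) × (Fin n → ℝ) → ℝ} (hU : IsOpen U) (hV : IsOpen V)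
    (hG : ContDiffOn ℝ (⊤ : ℕ∞) G (U ×ˢ V)) {H : (Fin n → ℝ) → (Fin n → ℝ) → ℝ}
    (heq : ∀ x ∈ U, ∀ y ∈ V, H x y = G (x, y))
    {x y : Fin n → ℝ} (hx : x ∈ U) (hy : y ∈ V) (i : Fin n) :
    pd1 H i x y = fderiv ℝ G (x, y) (Pi.single i 1, 0) := by
  have hGd : DifferentiableAt ℝ G (x, y) := aux_diff hU hV hG hx hy
  have hev : (fun x' => H x' y) =ᶠ[nhds x] fun x' => G (x', y) :=
    eventually_of_mem (hU.mem_nhds hx) fun x' hx' => heq x' hx' y hy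
  have hcomp : HasFDerivAt (fun x' => G (x', y))
      ((fderiv ℝ G (x, y)).comp ((ContinuousLinearMap.id ℝ (Fin n → ℝ)).prod 0)) x :=
    hGd.hasFDerivAt.comp x (HasFDerivAt.prodMk (hasFDerivAt_id x) (hasFDerivAt_const y x))
  have h : fderiv ℝ (fun x' => H x' y) x = fderiv ℝ (fun x' => G (x', y)) x := hev.fderiv_eq
  simp only [pd1, h, hcomp.fderiv]
  simp

lemma aux_pd2 {G : (Fin n → ℝ) × (Fin n → ℝ) → ℝ} (hU : IsOpen U) (hV : IsOpen V)
    (hG : ContDiffOn ℝ (⊤ : ℕ∞) G (U ×ˢ V)) {H : (Fin n → ℝ) → (Fin n → ℝ) → ℝ}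
    (heq : ∀ x ∈ U, ∀ y ∈ V, H x y = G (x, y))
    {x y : Fin n → ℝ} (hx : x ∈ U) (hy : y ∈ V) (j : Fin n) :
    pd2 H j x y = fderiv ℝ G (x, y) (0, Pi.single j 1) := by
  have hGd : DifferentiableAt ℝ G (x, y) := aux_diff hU hV hG hx hy
  have hev : (fun y' => H x y') =ᶠ[nhds y] fun y' => G (x, y') :=
    eventually_of_mem (hV.mem_nhds hy) fun y' hy' => heq x hx y' hy'
  have hcomp : HasFDerivAt (fun y' => G (x, y'))
      ((fderiv ℝ G (x, y)).comp ((0 : (Fin n → ℝ) →L[ℝ] (Fin n → ℝ)).prod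
        (ContinuousLinearMap.id ℝ (Fin n → ℝ)))) y :=
    hGd.hasFDerivAt.comp y (HasFDerivAt.prodMk (hasFDerivAt_const x y) (hasFDerivAt_id y))
  have h : fderiv ℝ (fun y' => H x y') y = fderiv ℝ (fun y' => G (x, y')) y := hev.fderiv_eq
  simp only [pd2, h, hcomp.fderiv]
  simp

lemma aux_expand (L : ((Fin n → ℝ) × (Fin n → ℝ)) →L[ℝ] ℝ) (w : Fin n → ℝ) :
    L (0, w) = ∑ m, w m * L (0, Pi.single m 1) := by
  have hw : ((0 : Fin n → ℝ), w) = ∑ m, w m • ((0 : Fin n → ℝ), (Pi.single m 1 : Fin n → ℝ)) := by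
    rw [Prod.ext_iff]
    constructor
    · rw [Prod.fst_sum]; simp
    · rw [Prod.snd_sum]; funext p; simp [Finset.sum_apply, Pi.single_apply]
  rw [hw, map_sum]
  exact Finset.sum_congr rfl fun m _ => by rw [map_smul]; simp [smul_eq_mul]

lemma aux_chain {G : (Fin n → ℝ) × (Fin n → ℝ) → ℝ} (hU : IsOpen U) (hV : IsOpen V)
    (hG : ContDiffOn ℝ (⊤ : ℕ∞) G (U ×ˢ V)) {H : (Fin n → ℝ) → (Fin n → ℝ) → ℝ}
    (heq : ∀ x ∈ U, ∀ y ∈ V, H x y = G (x, y))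
    {f : (Fin n → ℝ) → (Fin n → ℝ)} (hf : ContDiffOn ℝ (⊤ : ℕ∞) f U) (hfUV : Set.MapsTo f U V)
    {ξ : Fin n → ℝ} (hξ : ξ ∈ U) (k : Fin n) :
    fderiv ℝ (fun y' => H ξ (f y')) ξ (Pi.single k 1)
      = ∑ m, fderiv ℝ f ξ (Pi.single k 1) m * pd2 H m ξ (f ξ) := by
  have hGd : DifferentiableAt ℝ G (ξ, f ξ) := aux_diff hU hV hG hξ (hfUV hξ)
  have hfd : DifferentiableAt ℝ f ξ :=
    (hf.contDiffAt (hU.mem_nhds hξ)).differentiableAt (by simp)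
  have hev : (fun y' => H ξ (f y')) =ᶠ[nhds ξ] fun y' => G (ξ, f y') :=
    eventually_of_mem (hU.mem_nhds hξ) fun y' hy' => heq ξ hξ (f y') (hfUV hy')
  have hcomp : HasFDerivAt (fun y' => G (ξ, f y'))
      ((fderiv ℝ G (ξ, f ξ)).comp
        ((0 : (Fin n → ℝ) →L[ℝ] (Fin n → ℝ)).prod (fderiv ℝ f ξ))) ξ :=
    hGd.hasFDerivAt.comp ξ (HasFDerivAt.prodMk (hasFDerivAt_const ξ ξ) hfd.hasFDerivAt)
  rw [hev.fderiv_eq, hcomp.fderiv]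
  have h2 : ((fderiv ℝ G (ξ, f ξ)).comp
      ((0 : (Fin n → ℝ) →L[ℝ] (Fin n → ℝ)).prod (fderiv ℝ f ξ))) (Pi.single k 1)
      = fderiv ℝ G (ξ, f ξ) (0, fderiv ℝ f ξ (Pi.single k 1)) := by simp
  rw [h2, aux_expand]
  refine Finset.sum_congr rfl fun m _ => ?_
  rw [aux_pd2 hU hV hG heq hξ (hfUV hξ)]

lemma aux_smooth {G : (Fin n → ℝ) × (Fin n → ℝ) → ℝ} (hU : IsOpen U) (hV : IsOpen V)
    (hG : ContDiffOn ℝ (⊤ : ℕ∞) G (U ×ˢ V)) (v : (Fin n → ℝ) × (Fin n → ℝ)) :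
    ContDiffOn ℝ (⊤ : ℕ∞) (fun z => fderiv ℝ G z v) (U ×ˢ V) :=
  (hG.fderiv_of_isOpen (hU.prod hV) (by simp)).clm_apply contDiffOn_const

end aux


/-- the primal Christoffel symbols of the c-divergence in primal
coordinates: `Γ_{ijk} = −c_{ij:m̄} ∂f^{m̄}/∂ξᵏ` and `Γ_{ij}^k = c_{ij:m̄} c^{m̄:k}`. -/
theorem c_divergence_christoffel_formula {n : ℕ}
    (U V : Set (Fin n → ℝ)) (hU : IsOpen U) (hV : IsOpen V)
    (c : (Fin n → ℝ) → (Fin n → ℝ) → ℝ)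
    (hc : ContDiffOn ℝ (⊤ : ℕ∞) (fun z : (Fin n → ℝ) × (Fin n → ℝ) => c z.1 z.2) (U ×ˢ V))
    (f : (Fin n → ℝ) → (Fin n → ℝ))
    (hf : ContDiffOn ℝ (⊤ : ℕ∞) f U) (hfUV : Set.MapsTo f U V) (hfinj : Set.InjOn f U)
    (φ ψ : (Fin n → ℝ) → ℝ)
    (hφ : ContDiffOn ℝ (⊤ : ℕ∞) φ U)
    (hpot : ∀ ξ ∈ U, φ ξ + ψ (f ξ) = c ξ (f ξ))
    (D : (Fin n → ℝ) → (Fin n → ℝ) → ℝ)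
    (hD : ∀ ξ ξ', D ξ ξ' = c ξ (f ξ') - φ ξ - ψ (f ξ'))
    -- Jacobian of f and its inverse
    (J Jinv : (Fin n → ℝ) → Matrix (Fin n) (Fin n) ℝ)
    (hJ : ∀ ξ ∈ U, ∀ m j : Fin n, J ξ m j = fderiv ℝ f ξ (Pi.single j 1) m)
    (hJinv : ∀ ξ ∈ U, J ξ * Jinv ξ = 1 ∧ Jinv ξ * J ξ = 1)
    -- inverse of the mixed Hessian (c_{i:m̄})
    (cinv : (Fin n → ℝ) → (Fin n → ℝ) → Matrix (Fin n) (Fin n) ℝ)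
    (hcinv : ∀ x ∈ U, ∀ y ∈ V,
      (Matrix.of fun i j => pd2 (pd1 c i) j x y) * cinv x y = 1 ∧
      cinv x y * (Matrix.of fun i j => pd2 (pd1 c i) j x y) = 1)
    -- inverse of the information-geometric metric g_{ij} = −∂∂'D |_diag
    (ginv : (Fin n → ℝ) → Matrix (Fin n) (Fin n) ℝ)
    (hginv : ∀ ξ ∈ U,
      (Matrix.of fun i j => -(pd2 (pd1 D i) j ξ ξ)) * ginv ξ = 1 ∧
      ginv ξ * (Matrix.of fun i j => -(pd2 (pd1 D i) j ξ ξ)) = 1) :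
    ∀ ξ ∈ U, ∀ i j k : Fin n,
      (-(pd2 (pd1 (pd1 D i) j) k ξ ξ)
          = -∑ m, pd2 (pd1 (pd1 c i) j) m ξ (f ξ) * J ξ m k) ∧
      (∑ m, (-(pd2 (pd1 (pd1 D i) j) m ξ ξ)) * ginv ξ m k
          = ∑ m, pd2 (pd1 (pd1 c i) j) m ξ (f ξ) * cinv ξ (f ξ) m k) := by
  have hcsm := hc
  -- first-level representation of pd1 c i
  have h1eq : ∀ i : Fin n, ∀ x ∈ U, ∀ y ∈ V, pd1 c i x y
      = fderiv ℝ (fun z : (Fin n → ℝ) × (Fin n → ℝ) => c z.1 z.2) (x, y) (Pi.single i 1, 0) :=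
    fun i x hx y hy => aux_pd1 hU hV hc (fun _ _ _ _ => rfl) hx hy i
  have hP1sm : ∀ i : Fin n, ContDiffOn ℝ (⊤ : ℕ∞)
      (fun z => fderiv ℝ (fun z : (Fin n → ℝ) × (Fin n → ℝ) => c z.1 z.2) z (Pi.single i 1, 0))
      (U ×ˢ V) := fun i => aux_smooth hU hV hc _
  have h11eq : ∀ i j : Fin n, ∀ x ∈ U, ∀ y ∈ V, pd1 (pd1 c i) j x y
      = fderiv ℝ (fun z => fderiv ℝ (fun z : (Fin n → ℝ) × (Fin n → ℝ) => c z.1 z.2) z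
          (Pi.single i 1, 0)) (x, y) (Pi.single j 1, 0) :=
    fun i j x hx y hy => aux_pd1 hU hV (hP1sm i) (h1eq i) hx hy j
  have hP11sm : ∀ i j : Fin n, ContDiffOn ℝ (⊤ : ℕ∞)
      (fun z => fderiv ℝ (fun z => fderiv ℝ (fun z : (Fin n → ℝ) × (Fin n → ℝ) => c z.1 z.2) z
          (Pi.single i 1, 0)) z (Pi.single j 1, 0)) (U ×ˢ V) :=
    fun i j => aux_smooth hU hV (hP1sm i) _
  -- differentiability helpers
  have hφd : ∀ x ∈ U, DifferentiableAt ℝ φ x :=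
    fun x hx => (hφ.contDiffAt (hU.mem_nhds hx)).differentiableAt (by simp)
  have hcd : ∀ x ∈ U, ∀ y ∈ V, DifferentiableAt ℝ (fun x' => c x' y) x := by
    intro x hx y hy
    exact (aux_diff hU hV hc hx hy).comp x ((differentiableAt_id : DifferentiableAt ℝ (id : (Fin n → ℝ) → (Fin n → ℝ)) x).prodMk (differentiableAt_const y))
  -- Step A
  have stepA : ∀ i : Fin n, ∀ x ∈ U, ∀ y ∈ U,
      pd1 D i x y = pd1 c i x (f y) - fderiv ℝ φ x (Pi.single i 1) := by
    intro i x hx y hy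
    have hfun : (fun x' => D x' y) = fun x' => c x' (f y) - φ x' - ψ (f y) :=
      funext fun x' => hD x' y
    simp only [pd1, hfun]
    rw [fderiv_sub_const, fderiv_fun_sub (hcd x hx (f y) (hfUV hy)) (hφd x hx)]
    simp
  -- Step B
  have stepB : ∀ i j : Fin n, ∀ x ∈ U, ∀ y ∈ U,
      pd1 (pd1 D i) j x y = pd1 (pd1 c i) j x (f y)
        - fderiv ℝ (fun x' => fderiv ℝ φ x' (Pi.single i 1)) x (Pi.single j 1) := by
    intro i j x hx y hy
    have hev : (fun x' => pd1 D i x' y) =ᶠ[nhds x]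
        fun x' => pd1 c i x' (f y) - fderiv ℝ φ x' (Pi.single i 1) :=
      eventually_of_mem (hU.mem_nhds hx) fun x' hx' => stepA i x' hx' y hy
    have hA : DifferentiableAt ℝ (fun x' => pd1 c i x' (f y)) x := by
      have heva : (fun x' => pd1 c i x' (f y)) =ᶠ[nhds x]
          fun x' => fderiv ℝ (fun z : (Fin n → ℝ) × (Fin n → ℝ) => c z.1 z.2) (x', f y)
            (Pi.single i 1, 0) :=
        eventually_of_mem (hU.mem_nhds hx) fun x' hx' => h1eq i x' hx' (f y) (hfUV hy)
      rw [heva.differentiableAt_iff]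
      exact (aux_diff hU hV (hP1sm i) hx (hfUV hy)).comp x
        ((differentiableAt_id : DifferentiableAt ℝ (id : (Fin n → ℝ) → (Fin n → ℝ)) x).prodMk (differentiableAt_const (f y)))
    have hB : DifferentiableAt ℝ (fun x' => fderiv ℝ φ x' (Pi.single i 1)) x :=
      ((((hφ.fderiv_of_isOpen (m := (⊤ : ℕ∞)) hU (by simp)).clm_apply contDiffOn_const)).contDiffAt
        (hU.mem_nhds hx)).differentiableAt (by simp)
    have hL : pd1 (pd1 D i) j x y = fderiv ℝ (fun x' => pd1 D i x' y) x (Pi.single j 1) := rfl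
    rw [hL, hev.fderiv_eq, fderiv_fun_sub hA hB, ContinuousLinearMap.sub_apply]
    rfl
  intro ξ hξ
  have hfV : f ξ ∈ V := hfUV hξ
  -- main2 : metric formula
  have main2 : ∀ i j : Fin n,
      pd2 (pd1 D i) j ξ ξ = ∑ m, pd2 (pd1 c i) m ξ (f ξ) * J ξ m j := by
    intro i j
    have hev : (fun y' => pd1 D i ξ y') =ᶠ[nhds ξ]
        fun y' => pd1 c i ξ (f y') - fderiv ℝ φ ξ (Pi.single i 1) :=
      eventually_of_mem (hU.mem_nhds hξ) fun y' hy' => stepA i ξ hξ y' hy'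
    have hL : pd2 (pd1 D i) j ξ ξ = fderiv ℝ (fun y' => pd1 D i ξ y') ξ (Pi.single j 1) := rfl
    rw [hL, hev.fderiv_eq, fderiv_sub_const,
      aux_chain hU hV (hP1sm i) (h1eq i) hf hfUV hξ j]
    exact Finset.sum_congr rfl fun m _ => by rw [hJ ξ hξ m j, mul_comm]
  -- main1 : Christoffel formula
  have main1 : ∀ i j k : Fin n,
      pd2 (pd1 (pd1 D i) j) k ξ ξ = ∑ m, pd2 (pd1 (pd1 c i) j) m ξ (f ξ) * J ξ m k := by
    intro i j k
    have hev : (fun y' => pd1 (pd1 D i) j ξ y') =ᶠ[nhds ξ]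
        fun y' => pd1 (pd1 c i) j ξ (f y')
          - fderiv ℝ (fun x' => fderiv ℝ φ x' (Pi.single i 1)) ξ (Pi.single j 1) :=
      eventually_of_mem (hU.mem_nhds hξ) fun y' hy' => stepB i j ξ hξ y' hy'
    have hL : pd2 (pd1 (pd1 D i) j) k ξ ξ
        = fderiv ℝ (fun y' => pd1 (pd1 D i) j ξ y') ξ (Pi.single k 1) := rfl
    rw [hL, hev.fderiv_eq, fderiv_sub_const,
      aux_chain hU hV (hP11sm i j) (h11eq i j) hf hfUV hξ k]
    exact Finset.sum_congr rfl fun m _ => by rw [hJ ξ hξ m k, mul_comm]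
  intro i j k
  refine ⟨by rw [main1 i j k], ?_⟩
  -- matrix algebra
  have hGmat : (Matrix.of fun i j => -(pd2 (pd1 D i) j ξ ξ))
      = -((Matrix.of fun i j => pd2 (pd1 c i) j ξ (f ξ)) * J ξ) := by
    ext i' j'
    simp [Matrix.mul_apply, main2 i' j']
  have hcJ : (Matrix.of fun i j => pd2 (pd1 c i) j ξ (f ξ)) * J ξ
      * (Jinv ξ * cinv ξ (f ξ)) = 1 := by
    rw [mul_assoc, ← mul_assoc (J ξ), (hJinv ξ hξ).1, one_mul, (hcinv ξ hξ (f ξ) hfV).1]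
  have hginvξ : ginv ξ = -(Jinv ξ * cinv ξ (f ξ)) := by
    have h2 := (hginv ξ hξ).2
    rw [hGmat] at h2
    calc ginv ξ = ginv ξ * 1 := (mul_one _).symm
      _ = ginv ξ * (-((Matrix.of fun i j => pd2 (pd1 c i) j ξ (f ξ)) * J ξ)
            * -(Jinv ξ * cinv ξ (f ξ))) := by rw [neg_mul_neg, hcJ]
      _ = ginv ξ * -((Matrix.of fun i j => pd2 (pd1 c i) j ξ (f ξ)) * J ξ)
            * -(Jinv ξ * cinv ξ (f ξ)) := (mul_assoc _ _ _).symm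
      _ = 1 * -(Jinv ξ * cinv ξ (f ξ)) := by rw [h2]
      _ = -(Jinv ξ * cinv ξ (f ξ)) := one_mul _
  have hJQ : J ξ * (Jinv ξ * cinv ξ (f ξ)) = cinv ξ (f ξ) := by
    rw [← mul_assoc, (hJinv ξ hξ).1, one_mul]
  calc ∑ m, (-(pd2 (pd1 (pd1 D i) j) m ξ ξ)) * ginv ξ m k
      = ∑ m, (∑ p, pd2 (pd1 (pd1 c i) j) p ξ (f ξ) * J ξ p m)
          * ((Jinv ξ * cinv ξ (f ξ)) m k) := by
        refine Finset.sum_congr rfl fun m _ => ?_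
        rw [main1 i j m, hginvξ]
        simp
    _ = ∑ p, pd2 (pd1 (pd1 c i) j) p ξ (f ξ)
          * ∑ m, J ξ p m * (Jinv ξ * cinv ξ (f ξ)) m k := by
        simp_rw [Finset.sum_mul]
        rw [Finset.sum_comm]
        simp_rw [mul_assoc, ← Finset.mul_sum]
    _ = ∑ p, pd2 (pd1 (pd1 c i) j) p ξ (f ξ) * cinv ξ (f ξ) p k := by
        refine Finset.sum_congr rfl fun p _ => ?_
        rw [← Matrix.mul_apply, hJQ]
end

section
/- Let c be a smooth nondegenerate cost on U × V ⊂ ℝⁿ × ℝⁿ. For the Levi-Civita connection of the pseudo-metric h = (1/2)Hess δ (where δ is the cross-difference), the Christoffel symbols in product coordinates (ξ, η') satisfy: the only possibly nonzero symbols are Γ̄_{ij}^k = c_{ij:m̄} c^{m̄:k} and Γ̄_{ī j̄}^{k̄} = c^{k̄:m} c_{m:ī j̄}; all Christoffel symbols with mixed index types (e.g., Γ̄_{i j̄}^k, Γ̄_{ij}^{k̄}) vanish. -/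
/-- Coordinate direction in the product space `M × M'`: `inl i` is the `ξⁱ`
direction, `inr j` the `η'^j̄` direction. -/
noncomputable def dirv {n : ℕ} : Fin n ⊕ Fin n → (Fin n → ℝ) × (Fin n → ℝ)
  | Sum.inl i => (Pi.single i 1, 0)
  | Sum.inr j => (0, Pi.single j 1)

/-- Partial derivative on the product space in the coordinate direction `A`. -/
noncomputable def pdz {n : ℕ} (F : (Fin n → ℝ) × (Fin n → ℝ) → ℝ)
    (A : Fin n ⊕ Fin n) : (Fin n → ℝ) × (Fin n → ℝ) → ℝ :=
  fun z => fderiv ℝ F z (dirv A)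

/-- Mixed second partial `c_{i:j̄}` of a cost on the product space. -/
noncomputable def cmix {n : ℕ} (c : (Fin n → ℝ) × (Fin n → ℝ) → ℝ) (i j : Fin n) :
    (Fin n → ℝ) × (Fin n → ℝ) → ℝ :=
  pdz (pdz c (Sum.inl i)) (Sum.inr j)

section helpers
variable {n : ℕ} {s : Set ((Fin n → ℝ) × (Fin n → ℝ))}

lemma pdz_contDiffOn (hs : IsOpen s) {f : (Fin n → ℝ) × (Fin n → ℝ) → ℝ}
    (hf : ContDiffOn ℝ (⊤ : ℕ∞) f s) (A : Fin n ⊕ Fin n) :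
    ContDiffOn ℝ (⊤ : ℕ∞) (pdz f A) s := by
  have h1 : ContDiffOn ℝ (⊤ : ℕ∞) (fderiv ℝ f) s :=
    hf.fderiv_of_isOpen hs (by exact_mod_cast le_refl _)
  exact h1.clm_apply contDiffOn_const

lemma pdz_congr (hs : IsOpen s) {f g : (Fin n → ℝ) × (Fin n → ℝ) → ℝ}
    (hfg : ∀ w ∈ s, f w = g w) {z} (hz : z ∈ s) (A : Fin n ⊕ Fin n) :
    pdz f A z = pdz g A z := by
  have h : f =ᶠ[nhds z] g := Filter.eventuallyEq_of_mem (hs.mem_nhds hz) hfg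
  unfold pdz
  rw [h.fderiv_eq]

lemma pdz_swap (hs : IsOpen s) {f : (Fin n → ℝ) × (Fin n → ℝ) → ℝ}
    (hf : ContDiffOn ℝ (⊤ : ℕ∞) f s) {z} (hz : z ∈ s) (A B : Fin n ⊕ Fin n) :
    pdz (pdz f A) B z = pdz (pdz f B) A z := by
  have hct : ContDiffAt ℝ (⊤ : ℕ∞) f z := hf.contDiffAt (hs.mem_nhds hz)
  have hsymm : IsSymmSndFDerivAt ℝ f z :=
    hct.isSymmSndFDerivAt (by rw [minSmoothness_of_isRCLikeNormedField]; exact WithTop.coe_le_coe.2 (le_top : (2:ℕ∞) ≤ ⊤))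
  have hdf : DifferentiableAt ℝ (fderiv ℝ f) z :=
    ((hf.fderiv_of_isOpen hs (m := (⊤:ℕ∞)) (by exact_mod_cast le_refl _)).differentiableOn
      (by simp)).differentiableAt (hs.mem_nhds hz)
  have key : ∀ X Y : Fin n ⊕ Fin n,
      pdz (pdz f X) Y z = fderiv ℝ (fderiv ℝ f) z (dirv Y) (dirv X) := by
    intro X Y
    show fderiv ℝ (fun w => fderiv ℝ f w (dirv X)) z (dirv Y) = _
    rw [fderiv_clm_apply hdf (differentiableAt_const _)]
    simp
  rw [key, key, hsymm]

lemma pdz_const_mul {f : (Fin n → ℝ) × (Fin n → ℝ) → ℝ} (a : ℝ) {z}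
    (hf : DifferentiableAt ℝ f z) (A : Fin n ⊕ Fin n) :
    pdz (fun w => a * f w) A z = a * pdz f A z := by
  unfold pdz
  rw [fderiv_const_mul hf]
  simp

lemma pdz_zero {z : (Fin n → ℝ) × (Fin n → ℝ)} (A : Fin n ⊕ Fin n) :
    pdz (fun _ => (0:ℝ)) A z = 0 := by
  unfold pdz
  rw [fderiv_fun_const]
  simp

end helpers

lemma hinv_eq {n : ℕ}
    (M N : Matrix (Fin n) (Fin n) ℝ)
    (hMN : M * N = 1) (hNM : N * M = 1)
    (Hz Kz : (Fin n ⊕ Fin n) → (Fin n ⊕ Fin n) → ℝ)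
    (h1 : ∀ i j, Hz (Sum.inl i) (Sum.inl j) = 0)
    (h2 : ∀ i j, Hz (Sum.inr i) (Sum.inr j) = 0)
    (h3 : ∀ i j, Hz (Sum.inl i) (Sum.inr j) = -(1/2) * M i j)
    (h4 : ∀ i j, Hz (Sum.inr j) (Sum.inl i) = -(1/2) * M i j)
    (hK : ∀ A B, (∑ C, Hz A C * Kz C B) = (if A = B then 1 else 0) ∧
                 (∑ C, Kz A C * Hz C B) = (if A = B then 1 else 0)) :
    (∀ i j, Kz (Sum.inl i) (Sum.inl j) = 0) ∧
    (∀ i j, Kz (Sum.inr i) (Sum.inr j) = 0) ∧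
    (∀ i j, Kz (Sum.inl i) (Sum.inr j) = -2 * N j i) ∧
    (∀ i j, Kz (Sum.inr i) (Sum.inl j) = -2 * N i j) := by
  have hMNe : ∀ i k, (∑ m, M i m * N m k) = if i = k then 1 else 0 := by
    intro i k
    have := congrFun (congrFun hMN i) k
    simpa [Matrix.mul_apply, Matrix.one_apply] using this
  have hNMe : ∀ i k, (∑ m, N i m * M m k) = if i = k then 1 else 0 := by
    intro i k
    have := congrFun (congrFun hNM i) k
    simpa [Matrix.mul_apply, Matrix.one_apply] using this
  set Hm : Matrix (Fin n ⊕ Fin n) (Fin n ⊕ Fin n) ℝ := Matrix.of Hz with hHm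
  set Km : Matrix (Fin n ⊕ Fin n) (Fin n ⊕ Fin n) ℝ := Matrix.of Kz with hKm
  set G : Matrix (Fin n ⊕ Fin n) (Fin n ⊕ Fin n) ℝ := Matrix.of
    (fun A B => match A, B with
      | .inl i, .inr l => -2 * N l i
      | .inr m, .inl k => -2 * N m k
      | _, _ => 0) with hG
  have hKH : Km * Hm = 1 := by
    ext A B
    have := (hK A B).2
    simpa [Matrix.mul_apply, Matrix.one_apply, hKm, hHm] using this
  have hHG : Hm * G = 1 := by
    ext A B
    rw [Matrix.mul_apply]
    rw [Fintype.sum_sum_type]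
    cases A with
    | inl i =>
      cases B with
      | inl k =>
        simp only [hHm, hG, Matrix.of_apply, h1, h3, zero_mul, Finset.sum_const_zero,
          Matrix.one_apply, Sum.inl.injEq, zero_add]
        rw [← hMNe i k]
        apply Finset.sum_congr rfl
        intro m _
        ring
      | inr k =>
        simp [hHm, hG, h1, h3, Matrix.one_apply]
    | inr j =>
      cases B with
      | inl k =>
        simp [hHm, hG, h2, h4, Matrix.one_apply]
      | inr k =>
        simp only [hHm, hG, Matrix.of_apply, h2, h4, zero_mul, Finset.sum_const_zero,
          Matrix.one_apply, Sum.inr.injEq, add_zero]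
        have hjk : (if j = k then (1:ℝ) else 0) = if k = j then 1 else 0 := by simp [eq_comm]
        rw [hjk, ← hNMe k j]
        apply Finset.sum_congr rfl
        intro m _
        ring
  have hKG : Km = G := by
    calc Km = Km * (Hm * G) := by rw [hHG, Matrix.mul_one]
    _ = (Km * Hm) * G := by rw [Matrix.mul_assoc]
    _ = G := by rw [hKH, Matrix.one_mul]
  have hE : ∀ A B, Kz A B = G A B := fun A B => congrFun (congrFun (congrArg (fun P => (P : Matrix _ _ ℝ)) hKG) A) B
  refine ⟨fun i j => ?_, fun i j => ?_, fun i j => ?_, fun i j => ?_⟩ <;>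
    simp [hE, hG]


/-- the Christoffel symbols of the Levi-Civita connection of the
Kim–McCann pseudo-metric `h`: the only possibly nonzero symbols are
`Γ̄_{ij}^k = c_{ij:m̄} c^{m̄:k}` and `Γ̄_{īj̄}^{k̄} = c^{k̄:m} c_{m:īj̄}`;
all mixed-type symbols vanish. -/
theorem kim_mccann_christoffel {n : ℕ}
    (U V : Set (Fin n → ℝ)) (hU : IsOpen U) (hV : IsOpen V)
    (c : (Fin n → ℝ) × (Fin n → ℝ) → ℝ)
    (hc : ContDiffOn ℝ (⊤ : ℕ∞) c (U ×ˢ V))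
    -- the pseudo-metric h in block form
    (H : (Fin n → ℝ) × (Fin n → ℝ) → (Fin n ⊕ Fin n) → (Fin n ⊕ Fin n) → ℝ)
    (hH1 : ∀ z i j, H z (Sum.inl i) (Sum.inl j) = 0)
    (hH2 : ∀ z i j, H z (Sum.inr i) (Sum.inr j) = 0)
    (hH3 : ∀ z i j, H z (Sum.inl i) (Sum.inr j) = -(1 / 2) * cmix c i j z)
    (hH4 : ∀ z i j, H z (Sum.inr j) (Sum.inl i) = -(1 / 2) * cmix c i j z)
    -- inverse metric h^{AB}
    (Hinv : (Fin n → ℝ) × (Fin n → ℝ) → (Fin n ⊕ Fin n) → (Fin n ⊕ Fin n) → ℝ)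
    (hHinv : ∀ z ∈ U ×ˢ V, ∀ A B : Fin n ⊕ Fin n,
      (∑ C : Fin n ⊕ Fin n, H z A C * Hinv z C B) = (if A = B then 1 else 0) ∧
      (∑ C : Fin n ⊕ Fin n, Hinv z A C * H z C B) = (if A = B then 1 else 0))
    -- inverse (c^{m̄:k}) of the mixed Hessian (c_{k:m̄})
    (cinv : (Fin n → ℝ) × (Fin n → ℝ) → Matrix (Fin n) (Fin n) ℝ)
    (hcinv : ∀ z ∈ U ×ˢ V,
      (Matrix.of fun i j => cmix c i j z) * cinv z = 1 ∧
      cinv z * (Matrix.of fun i j => cmix c i j z) = 1)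
    -- Levi-Civita Christoffel symbols Γ̄_{AB}^C of H
    (Γ : (Fin n → ℝ) × (Fin n → ℝ) → (Fin n ⊕ Fin n) → (Fin n ⊕ Fin n) →
      (Fin n ⊕ Fin n) → ℝ)
    (hΓ : ∀ z A B C, Γ z A B C = (1 / 2) * ∑ E : Fin n ⊕ Fin n, Hinv z C E *
      (pdz (fun w => H w B E) A z + pdz (fun w => H w A E) B z
        - pdz (fun w => H w A B) E z)) :
    ∀ z ∈ U ×ˢ V,
      (∀ i j k : Fin n, Γ z (Sum.inl i) (Sum.inl j) (Sum.inl k)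
          = ∑ m, pdz (pdz (pdz c (Sum.inl i)) (Sum.inl j)) (Sum.inr m) z * cinv z m k) ∧
      (∀ i j k : Fin n, Γ z (Sum.inr i) (Sum.inr j) (Sum.inr k)
          = ∑ m, cinv z k m * pdz (pdz (pdz c (Sum.inl m)) (Sum.inr i)) (Sum.inr j) z) ∧
      (∀ A B C : Fin n ⊕ Fin n,
        ¬ (A.isLeft = true ∧ B.isLeft = true ∧ C.isLeft = true) →
        ¬ (A.isRight = true ∧ B.isRight = true ∧ C.isRight = true) →
        Γ z A B C = 0) := by
  intro z hz
  have hs : IsOpen (U ×ˢ V) := hU.prod hV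
  have hc' : ContDiffOn ℝ (⊤ : ℕ∞) c (U ×ˢ V) := hc.of_le (by simp)
  have hsm1 : ∀ A, ContDiffOn ℝ (⊤ : ℕ∞) (pdz c A) (U ×ˢ V) :=
    fun A => pdz_contDiffOn hs hc' A
  have hsm2 : ∀ A B, ContDiffOn ℝ (⊤ : ℕ∞) (pdz (pdz c A) B) (U ×ˢ V) :=
    fun A B => pdz_contDiffOn hs (hsm1 A) B
  have hdiff2 : ∀ A B, DifferentiableAt ℝ (pdz (pdz c A) B) z :=
    fun A B => ((hsm2 A B).differentiableOn (by simp)).differentiableAt (hs.mem_nhds hz)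
  -- inverse metric entries
  obtain ⟨hK1, hK2, hK3, hK4⟩ :=
    hinv_eq (Matrix.of fun i j => cmix c i j z) (cinv z) (hcinv z hz).1 (hcinv z hz).2
      (H z) (Hinv z) (fun i j => hH1 z i j) (fun i j => hH2 z i j)
      (fun i j => hH3 z i j) (fun i j => hH4 z i j) (fun A B => hHinv z hz A B)
  -- derivatives of the metric entry functions
  have hDH_ll : ∀ (i j : Fin n) (A : Fin n ⊕ Fin n),
      pdz (fun w => H w (Sum.inl i) (Sum.inl j)) A z = 0 := by
    intro i j A
    rw [show (fun w => H w (Sum.inl i) (Sum.inl j)) = fun _ => (0:ℝ) from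
      funext fun w => hH1 w i j]
    exact pdz_zero A
  have hDH_rr : ∀ (i j : Fin n) (A : Fin n ⊕ Fin n),
      pdz (fun w => H w (Sum.inr i) (Sum.inr j)) A z = 0 := by
    intro i j A
    rw [show (fun w => H w (Sum.inr i) (Sum.inr j)) = fun _ => (0:ℝ) from
      funext fun w => hH2 w i j]
    exact pdz_zero A
  have hDH_lr : ∀ (i j : Fin n) (A : Fin n ⊕ Fin n),
      pdz (fun w => H w (Sum.inl i) (Sum.inr j)) A z
        = -(1/2) * pdz (cmix c i j) A z := by
    intro i j A
    rw [show (fun w => H w (Sum.inl i) (Sum.inr j)) = fun w => -(1/2) * cmix c i j w from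
      funext fun w => hH3 w i j]
    exact pdz_const_mul _ (hdiff2 (Sum.inl i) (Sum.inr j)) A
  have hDH_rl : ∀ (i j : Fin n) (A : Fin n ⊕ Fin n),
      pdz (fun w => H w (Sum.inr j) (Sum.inl i)) A z
        = -(1/2) * pdz (cmix c i j) A z := by
    intro i j A
    rw [show (fun w => H w (Sum.inr j) (Sum.inl i)) = fun w => -(1/2) * cmix c i j w from
      funext fun w => hH4 w i j]
    exact pdz_const_mul _ (hdiff2 (Sum.inl i) (Sum.inr j)) A
  -- symmetry of derivatives
  have hswap1 : ∀ A B C : Fin n ⊕ Fin n,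
      pdz (pdz (pdz c A) B) C z = pdz (pdz (pdz c A) C) B z :=
    fun A B C => pdz_swap hs (hsm1 A) hz B C
  have hswap_inner : ∀ A B C : Fin n ⊕ Fin n,
      pdz (pdz (pdz c A) B) C z = pdz (pdz (pdz c B) A) C z :=
    fun A B C => pdz_congr hs (fun w hw => pdz_swap hs hc' hw A B) hz C
  refine ⟨?_, ?_, ?_⟩
  · -- ξξ-ξ Christoffel symbols
    intro i j k
    rw [hΓ, Fintype.sum_sum_type]
    simp only [hK1, hK3, hDH_ll, hDH_lr, zero_mul, Finset.sum_const_zero, zero_add, sub_zero]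
    rw [Finset.mul_sum]
    apply Finset.sum_congr rfl
    intro m _
    have e1 : pdz (cmix c j m) (Sum.inl i) z
        = pdz (pdz (pdz c (Sum.inl i)) (Sum.inl j)) (Sum.inr m) z :=
      (hswap1 (Sum.inl j) (Sum.inr m) (Sum.inl i)).trans
        (hswap_inner (Sum.inl j) (Sum.inl i) (Sum.inr m))
    have e2 : pdz (cmix c i m) (Sum.inl j) z
        = pdz (pdz (pdz c (Sum.inl i)) (Sum.inl j)) (Sum.inr m) z :=
      hswap1 (Sum.inl i) (Sum.inr m) (Sum.inl j)
    rw [e1, e2]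
    ring
  · -- ηη-η Christoffel symbols
    intro i j k
    rw [hΓ, Fintype.sum_sum_type]
    simp only [hK2, hK4, hDH_rr, hDH_rl, zero_mul, Finset.sum_const_zero, add_zero, sub_zero]
    rw [Finset.mul_sum]
    apply Finset.sum_congr rfl
    intro m _
    simp only [cmix]
    rw [hswap1 (Sum.inl m) (Sum.inr j) (Sum.inr i)]
    ring
  · -- mixed symbols vanish
    intro A B C hL hR
    rcases A with i | i <;> rcases B with j | j <;> rcases C with k | k
    · simp at hL
    · -- LLR
      rw [hΓ, Fintype.sum_sum_type]
      simp only [hK2, hK4, hDH_ll, zero_mul, mul_zero, Finset.sum_const_zero,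
        add_zero, sub_zero, zero_add, zero_sub, neg_zero, mul_zero]
    · -- LRL
      rw [hΓ, Fintype.sum_sum_type]
      simp only [hK1, hK3, hDH_rr, hDH_lr, hDH_rl, zero_mul, Finset.sum_const_zero, zero_add]
      have e : ∀ m, pdz (cmix c i m) (Sum.inr j) z = pdz (cmix c i j) (Sum.inr m) z :=
        fun m => hswap1 (Sum.inl i) (Sum.inr m) (Sum.inr j)
      apply mul_eq_zero_of_right
      apply Finset.sum_eq_zero
      intro m _
      rw [e m]
      ring
    · -- LRR
      rw [hΓ, Fintype.sum_sum_type]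
      simp only [hK2, hK4, hDH_ll, hDH_lr, hDH_rl, zero_mul, Finset.sum_const_zero, add_zero]
      have e : ∀ m, pdz (cmix c m j) (Sum.inl i) z = pdz (cmix c i j) (Sum.inl m) z := by
        intro m
        exact ((hswap1 (Sum.inl m) (Sum.inr j) (Sum.inl i)).trans
          (hswap_inner (Sum.inl m) (Sum.inl i) (Sum.inr j))).trans
          (hswap1 (Sum.inl i) (Sum.inl m) (Sum.inr j))
      apply mul_eq_zero_of_right
      apply Finset.sum_eq_zero
      intro m _
      rw [e m]
      ring
    · -- RLL
      rw [hΓ, Fintype.sum_sum_type]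
      simp only [hK1, hK3, hDH_rr, hDH_lr, hDH_rl, zero_mul, Finset.sum_const_zero, zero_add]
      have e : ∀ m, pdz (cmix c j m) (Sum.inr i) z = pdz (cmix c j i) (Sum.inr m) z :=
        fun m => hswap1 (Sum.inl j) (Sum.inr m) (Sum.inr i)
      apply mul_eq_zero_of_right
      apply Finset.sum_eq_zero
      intro m _
      rw [e m]
      ring
    · -- RLR
      rw [hΓ, Fintype.sum_sum_type]
      simp only [hK2, hK4, hDH_ll, hDH_lr, hDH_rl, zero_mul, Finset.sum_const_zero, add_zero]
      have e : ∀ m, pdz (cmix c m i) (Sum.inl j) z = pdz (cmix c j i) (Sum.inl m) z := by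
        intro m
        exact ((hswap1 (Sum.inl m) (Sum.inr i) (Sum.inl j)).trans
          (hswap_inner (Sum.inl m) (Sum.inl j) (Sum.inr i))).trans
          (hswap1 (Sum.inl j) (Sum.inl m) (Sum.inr i))
      apply mul_eq_zero_of_right
      apply Finset.sum_eq_zero
      intro m _
      rw [e m]
      ring
    · -- RRL
      rw [hΓ, Fintype.sum_sum_type]
      simp only [hK1, hK3, hDH_rr, zero_mul, mul_zero, Finset.sum_const_zero,
        add_zero, sub_zero, zero_add, zero_sub, neg_zero]
    · simp at hR
end

section
/- For the pseudo-Riemannian metric h of a nondegenerate cost c on U × V ⊂ ℝⁿ × ℝⁿ, in product coordinates the Riemann curvature coefficients of h with one unbarred, two barred, one unbarred index satisfy R̄_{i j̄ k̄ ℓ}(ξ, η') = (1/2)( − c_{iℓ:j̄k̄} + c_{iℓ:β̄} c^{β̄:α} c_{α:j̄k̄} ), and all coefficients R̄ with an unequal number of barred and unbarred indices vanish (in particular R̄_{ijk̄ℓ̄} = 0). -/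
open scoped ContDiff

namespace KMaux

variable {n : ℕ} {S : Set ((Fin n → ℝ) × (Fin n → ℝ))}
  {f g : (Fin n → ℝ) × (Fin n → ℝ) → ℝ} {z : (Fin n → ℝ) × (Fin n → ℝ)}

theorem pdz_congr_nhds (h : f =ᶠ[nhds z] g) (A) : pdz f A z = pdz g A z := by
  unfold pdz; rw [h.fderiv_eq]

theorem pdz_congrOn (hS : IsOpen S) (h : ∀ w ∈ S, f w = g w) (A) :
    ∀ z ∈ S, pdz f A z = pdz g A z := fun z hz =>
  pdz_congr_nhds (Filter.eventuallyEq_of_mem (hS.mem_nhds hz) h) A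

theorem pdz_const (a : ℝ) (A) : pdz (fun _ => a) A z = 0 := by
  unfold pdz; simp

theorem pdz_zeroOn (hS : IsOpen S) (h : ∀ w ∈ S, f w = 0) (A) (hz : z ∈ S) :
    pdz f A z = 0 := by
  rw [pdz_congrOn hS (g := fun _ => (0:ℝ)) h A z hz]; exact pdz_const 0 A

theorem contDiffOn_pdz (hS : IsOpen S) (hf : ContDiffOn ℝ ∞ f S) (A) :
    ContDiffOn ℝ (∞ : WithTop ℕ∞) (pdz f A) S := by
  have h1 : ContDiffOn ℝ ∞ (fderiv ℝ f) S :=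
    hf.fderiv_of_isOpen hS (le_of_eq (by rfl))
  exact h1.clm_apply contDiffOn_const

theorem diffAt (hS : IsOpen S) (hf : ContDiffOn ℝ ∞ f S) (hz : z ∈ S) :
    DifferentiableAt ℝ f z :=
  ((hf z hz).contDiffAt (hS.mem_nhds hz)).differentiableAt
    (by simp)

theorem pdz_comm (hS : IsOpen S) (hf : ContDiffOn ℝ ∞ f S) (hz : z ∈ S) (A B) :
    pdz (pdz f A) B z = pdz (pdz f B) A z := by
  have hat : ContDiffAt ℝ ∞ f z := (hf z hz).contDiffAt (hS.mem_nhds hz)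
  have hsym : IsSymmSndFDerivAt ℝ f z :=
    hat.isSymmSndFDerivAt (by rw [minSmoothness_of_isRCLikeNormedField]; norm_cast)
  have hd : DifferentiableAt ℝ (fderiv ℝ f) z :=
    (hat.fderiv_right (m := (1 : WithTop ℕ∞)) (by norm_cast)).differentiableAt one_ne_zero
  have key : ∀ V W, pdz (pdz f V) W z = fderiv ℝ (fderiv ℝ f) z (dirv W) (dirv V) := by
    intro V W
    show fderiv ℝ (fun w => fderiv ℝ f w (dirv V)) z (dirv W) = _
    rw [fderiv_clm_apply hd (differentiableAt_const _)]
    simp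
  rw [key A B, key B A, hsym]

theorem pdz_mul (hf : DifferentiableAt ℝ f z) (hg : DifferentiableAt ℝ g z) (A) :
    pdz (fun w => f w * g w) A z = pdz f A z * g z + f z * pdz g A z := by
  unfold pdz; rw [fderiv_fun_mul hf hg]; simp; ring

theorem pdz_sum {ι : Type*} [Fintype ι] {F : ι → (Fin n → ℝ) × (Fin n → ℝ) → ℝ}
    (hf : ∀ m, DifferentiableAt ℝ (F m) z) (A) :
    pdz (fun w => ∑ m, F m w) A z = ∑ m, pdz (F m) A z := by
  unfold pdz; rw [fderiv_fun_sum fun i _ => hf i]; simp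

theorem diffAt_finprod {ι : Type*} [DecidableEq ι] (u : Finset ι)
    {f : ι → (Fin n → ℝ) × (Fin n → ℝ) → ℝ} (h : ∀ i, DifferentiableAt ℝ (f i) z) :
    DifferentiableAt ℝ (fun w => ∏ i ∈ u, f i w) z := by
  induction u using Finset.induction with
  | empty => simpa using differentiableAt_const (1:ℝ)
  | insert a s hx ih =>
    have e : (fun w => ∏ i ∈ insert a s, f i w) = fun w => f a w * ∏ i ∈ s, f i w := by
      funext w; rw [Finset.prod_insert hx]
    rw [e]; exact (h a).mul ih

theorem diffAt_det {M : (Fin n → ℝ) × (Fin n → ℝ) → Matrix (Fin n) (Fin n) ℝ}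
    (h : ∀ i j, DifferentiableAt ℝ (fun w => M w i j) z) :
    DifferentiableAt ℝ (fun w => (M w).det) z := by
  have e : (fun w => (M w).det)
      = fun w => ∑ σ : Equiv.Perm (Fin n), (Equiv.Perm.sign σ : ℤ) * ∏ i, M w (σ i) i := by
    funext w; rw [Matrix.det_apply']
  rw [e]
  exact DifferentiableAt.fun_sum fun σ _ =>
    (diffAt_finprod Finset.univ (fun i => h (σ i) i)).const_mul _

theorem diffAt_adjugate {M : (Fin n → ℝ) × (Fin n → ℝ) → Matrix (Fin n) (Fin n) ℝ}
    (h : ∀ i j, DifferentiableAt ℝ (fun w => M w i j) z) (t m : Fin n) :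
    DifferentiableAt ℝ (fun w => (M w).adjugate t m) z := by
  have e : (fun w => (M w).adjugate t m)
      = fun w => ((M w).updateRow m (Pi.single t 1)).det := by
    funext w; rw [Matrix.adjugate_apply]
  rw [e]
  apply diffAt_det
  intro i j
  by_cases hi : i = m
  · have e2 : (fun w => (M w).updateRow m (Pi.single t (1:ℝ)) i j)
        = fun _ => (Pi.single t (1:ℝ) : Fin n → ℝ) j := by
      funext w; rw [Matrix.updateRow_apply, if_pos hi]
    rw [e2]; exact differentiableAt_const _
  · have e2 : (fun w => (M w).updateRow m (Pi.single t (1:ℝ)) i j)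
        = fun w => M w i j := by
      funext w; rw [Matrix.updateRow_apply, if_neg hi]
    rw [e2]; exact h i j

theorem sum_comm3 {α : Type*} [Fintype α] (f : α → α → α → ℝ) :
    ∑ m, ∑ p, ∑ q, f m p q = ∑ q, ∑ p, ∑ m, f m p q :=
  calc ∑ m, ∑ p, ∑ q, f m p q
      = ∑ m, ∑ q, ∑ p, f m p q := Finset.sum_congr rfl fun _ _ => Finset.sum_comm
    _ = ∑ q, ∑ m, ∑ p, f m p q := Finset.sum_comm
    _ = ∑ q, ∑ p, ∑ m, f m p q := Finset.sum_congr rfl fun _ _ => Finset.sum_comm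

theorem sum_comm3' {α : Type*} [Fintype α] (f : α → α → α → ℝ) :
    ∑ m, ∑ p, ∑ q, f m p q = ∑ q, ∑ m, ∑ p, f m p q :=
  calc ∑ m, ∑ p, ∑ q, f m p q
      = ∑ m, ∑ q, ∑ p, f m p q := Finset.sum_congr rfl fun _ _ => Finset.sum_comm
    _ = ∑ q, ∑ m, ∑ p, f m p q := Finset.sum_comm

end KMaux

/-- the Riemann curvature coefficients of the Kim–McCann metric:
`R̄_{ij̄k̄ℓ} = (1/2)(−c_{iℓ:j̄k̄} + c_{iℓ:β̄} c^{β̄:α} c_{α:j̄k̄})`, and all coefficients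
with an unequal number of barred and unbarred indices vanish. -/
theorem kim_mccann_curvature {n : ℕ}
    (U V : Set (Fin n → ℝ)) (hU : IsOpen U) (hV : IsOpen V)
    (c : (Fin n → ℝ) × (Fin n → ℝ) → ℝ)
    (hc : ContDiffOn ℝ (⊤ : ℕ∞) c (U ×ˢ V))
    (H : (Fin n → ℝ) × (Fin n → ℝ) → (Fin n ⊕ Fin n) → (Fin n ⊕ Fin n) → ℝ)
    (hH1 : ∀ z i j, H z (Sum.inl i) (Sum.inl j) = 0)
    (hH2 : ∀ z i j, H z (Sum.inr i) (Sum.inr j) = 0)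
    (hH3 : ∀ z i j, H z (Sum.inl i) (Sum.inr j) = -(1 / 2) * cmix c i j z)
    (hH4 : ∀ z i j, H z (Sum.inr j) (Sum.inl i) = -(1 / 2) * cmix c i j z)
    (cinv : (Fin n → ℝ) × (Fin n → ℝ) → Matrix (Fin n) (Fin n) ℝ)
    (hcinv : ∀ z ∈ U ×ˢ V,
      (Matrix.of fun i j => cmix c i j z) * cinv z = 1 ∧
      cinv z * (Matrix.of fun i j => cmix c i j z) = 1)
    -- Christoffel symbols of the Levi-Civita connection of H
    (Γ : (Fin n → ℝ) × (Fin n → ℝ) → (Fin n ⊕ Fin n) → (Fin n ⊕ Fin n) →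
      (Fin n ⊕ Fin n) → ℝ)
    (hΓ1 : ∀ z ∈ U ×ˢ V, ∀ i j k : Fin n, Γ z (Sum.inl i) (Sum.inl j) (Sum.inl k)
      = ∑ m, pdz (pdz (pdz c (Sum.inl i)) (Sum.inl j)) (Sum.inr m) z * cinv z m k)
    (hΓ2 : ∀ z ∈ U ×ˢ V, ∀ i j k : Fin n, Γ z (Sum.inr i) (Sum.inr j) (Sum.inr k)
      = ∑ m, cinv z k m * pdz (pdz (pdz c (Sum.inl m)) (Sum.inr i)) (Sum.inr j) z)
    (hΓ0 : ∀ z ∈ U ×ˢ V, ∀ A B C : Fin n ⊕ Fin n,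
      ¬ (A.isLeft = true ∧ B.isLeft = true ∧ C.isLeft = true) →
      ¬ (A.isRight = true ∧ B.isRight = true ∧ C.isRight = true) →
      Γ z A B C = 0)
    -- Riemann curvature with upper last index and the fully lowered tensor
    (Rup Rlow : (Fin n → ℝ) × (Fin n → ℝ) → (Fin n ⊕ Fin n) → (Fin n ⊕ Fin n) →
      (Fin n ⊕ Fin n) → (Fin n ⊕ Fin n) → ℝ)
    (hRup : ∀ z A B C E, Rup z A B C E
      = pdz (fun w => Γ w B C E) A z - pdz (fun w => Γ w A C E) B z
        + (∑ m : Fin n ⊕ Fin n, Γ z B C m * Γ z A m E)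
        - ∑ m : Fin n ⊕ Fin n, Γ z A C m * Γ z B m E)
    (hRlow : ∀ z A B C E, Rlow z A B C E = ∑ m : Fin n ⊕ Fin n, Rup z A B C m * H z m E) :
    ∀ z ∈ U ×ˢ V,
      (∀ i j k l : Fin n,
        Rlow z (Sum.inl i) (Sum.inr j) (Sum.inr k) (Sum.inl l)
          = (1 / 2) * (-(pdz (pdz (pdz (pdz c (Sum.inl i)) (Sum.inl l)) (Sum.inr j)) (Sum.inr k) z)
            + ∑ β, ∑ a, pdz (pdz (pdz c (Sum.inl i)) (Sum.inl l)) (Sum.inr β) z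
                * cinv z β a
                * pdz (pdz (pdz c (Sum.inl a)) (Sum.inr j)) (Sum.inr k) z)) ∧
      (∀ A B C E : Fin n ⊕ Fin n,
        ((if A.isRight then 1 else 0) + (if B.isRight then 1 else 0)
          + (if C.isRight then 1 else 0) + (if E.isRight then 1 else 0) : ℕ) ≠ 2 →
        Rlow z A B C E = 0) := by
  intro z hz
  have hS : IsOpen (U ×ˢ V) := hU.prod hV
  -- mixed Christoffel symbols vanish
  have hGmix : ∀ (A B C : Fin n ⊕ Fin n),
      ¬(A.isRight = B.isRight ∧ B.isRight = C.isRight) →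
      ∀ w ∈ U ×ˢ V, Γ w A B C = 0 := by
    intro A B C h w hw
    rcases A with a | a <;> rcases B with b | b <;> rcases C with e | e
    · exact absurd ⟨rfl, rfl⟩ h
    · refine hΓ0 w hw _ _ _ ?_ ?_ <;> simp
    · refine hΓ0 w hw _ _ _ ?_ ?_ <;> simp
    · refine hΓ0 w hw _ _ _ ?_ ?_ <;> simp
    · refine hΓ0 w hw _ _ _ ?_ ?_ <;> simp
    · refine hΓ0 w hw _ _ _ ?_ ?_ <;> simp
    · refine hΓ0 w hw _ _ _ ?_ ?_ <;> simp
    · exact absurd ⟨rfl, rfl⟩ h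

  have hc' : ContDiffOn ℝ ∞ c (U ×ˢ V) := hc.of_le (by simp)
  -- smoothness of iterated derivatives
  have hc1 : ∀ A, ContDiffOn ℝ ∞ (pdz c A) (U ×ˢ V) := fun A =>
    KMaux.contDiffOn_pdz hS hc' A
  have hc2 : ∀ A B, ContDiffOn ℝ ∞ (pdz (pdz c A) B) (U ×ˢ V) := fun A B =>
    KMaux.contDiffOn_pdz hS (hc1 A) B
  have hc3 : ∀ A B C, ContDiffOn ℝ ∞ (pdz (pdz (pdz c A) B) C) (U ×ˢ V) := fun A B C =>
    KMaux.contDiffOn_pdz hS (hc2 A B) C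
  have d2 : ∀ A B, DifferentiableAt ℝ (pdz (pdz c A) B) z := fun A B =>
    KMaux.diffAt hS (hc2 A B) hz
  have d3 : ∀ A B C, DifferentiableAt ℝ (pdz (pdz (pdz c A) B) C) z := fun A B C =>
    KMaux.diffAt hS (hc3 A B C) hz
  -- Schwarz symmetry instances
  have sw2 : ∀ A B, ∀ w ∈ U ×ˢ V, pdz (pdz c A) B w = pdz (pdz c B) A w := fun A B w hw =>
    KMaux.pdz_comm hS hc' hw A B
  have sw3o : ∀ A B C, ∀ w ∈ U ×ˢ V,
      pdz (pdz (pdz c A) B) C w = pdz (pdz (pdz c A) C) B w := fun A B C w hw =>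
    KMaux.pdz_comm hS (hc1 A) hw B C
  have sw3i : ∀ A B C, ∀ w ∈ U ×ˢ V,
      pdz (pdz (pdz c A) B) C w = pdz (pdz (pdz c B) A) C w := fun A B C w hw =>
    KMaux.pdz_congrOn hS (fun u hu => sw2 A B u hu) C w hw
  have sw4o : ∀ A B C D, ∀ w ∈ U ×ˢ V,
      pdz (pdz (pdz (pdz c A) B) C) D w = pdz (pdz (pdz (pdz c A) B) D) C w :=
    fun A B C D w hw => KMaux.pdz_comm hS (hc2 A B) hw C D
  have sw4m : ∀ A B C D, ∀ w ∈ U ×ˢ V,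
      pdz (pdz (pdz (pdz c A) B) C) D w = pdz (pdz (pdz (pdz c A) C) B) D w :=
    fun A B C D w hw => KMaux.pdz_congrOn hS (fun u hu => sw3o A B C u hu) D w hw
  have sw4i : ∀ A B C D, ∀ w ∈ U ×ˢ V,
      pdz (pdz (pdz (pdz c A) B) C) D w = pdz (pdz (pdz (pdz c B) A) C) D w :=
    fun A B C D w hw => KMaux.pdz_congrOn hS (fun u hu => sw3i A B C u hu) D w hw
  -- inverse matrix identities, entrywise
  have hinv1 : ∀ w ∈ U ×ˢ V, ∀ l m : Fin n,
      ∑ t, pdz (pdz c (Sum.inl l)) (Sum.inr t) w * cinv w t m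
        = if l = m then 1 else 0 := by
    intro w hw l m
    have h := congrArg (fun M : Matrix (Fin n) (Fin n) ℝ => M l m) (hcinv w hw).1
    simpa [Matrix.mul_apply, Matrix.one_apply, cmix] using h
  have hinv2 : ∀ w ∈ U ×ˢ V, ∀ l m : Fin n,
      ∑ t, cinv w l t * pdz (pdz c (Sum.inl t)) (Sum.inr m) w
        = if l = m then 1 else 0 := by
    intro w hw l m
    have h := congrArg (fun M : Matrix (Fin n) (Fin n) ℝ => M l m) (hcinv w hw).2
    simpa [Matrix.mul_apply, Matrix.one_apply, cmix] using h
  -- differentiability of the inverse matrix entries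
  have hcinvdiff : ∀ t m : Fin n, DifferentiableAt ℝ (fun u => cinv u t m) z := by
    intro t m
    have hMdiff : ∀ i j : Fin n,
        DifferentiableAt ℝ (fun u => (Matrix.of fun i' j' => cmix c i' j' u) i j) z :=
      fun i j => d2 (Sum.inl i) (Sum.inr j)
    have hdet0 : (Matrix.of fun i j => cmix c i j z).det ≠ 0 := by
      have hmul : (Matrix.of fun i j => cmix c i j z).det * (cinv z).det = 1 := by
        rw [← Matrix.det_mul, (hcinv z hz).1, Matrix.det_one]
      exact left_ne_zero_of_mul_eq_one hmul
    have heq : ∀ u ∈ U ×ˢ V, cinv u t m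
        = ((Matrix.of fun i j => cmix c i j u).det)⁻¹
          * (Matrix.of fun i j => cmix c i j u).adjugate t m := by
      intro u hu
      have h1 : (Matrix.of fun i j => cmix c i j u)⁻¹ = cinv u :=
        Matrix.inv_eq_right_inv (hcinv u hu).1
      rw [← h1, Matrix.inv_def, Ring.inverse_eq_inv, Matrix.smul_apply, smul_eq_mul]
    have hev : (fun u => cinv u t m) =ᶠ[nhds z]
        (fun u => ((Matrix.of fun i j => cmix c i j u).det)⁻¹
          * (Matrix.of fun i j => cmix c i j u).adjugate t m) :=
      Filter.eventuallyEq_of_mem (hS.mem_nhds hz) heq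
    rw [hev.differentiableAt_iff]
    exact ((KMaux.diffAt_det hMdiff).inv hdet0).mul (KMaux.diffAt_adjugate hMdiff t m)
  -- differentiated inverse identities
  have hDrow : ∀ (D : Fin n ⊕ Fin n) (l m : Fin n),
      ∑ t, pdz (pdz (pdz c (Sum.inl l)) (Sum.inr t)) D z * cinv z t m
        + ∑ t, pdz (pdz c (Sum.inl l)) (Sum.inr t) z * pdz (fun w => cinv w t m) D z
        = 0 := by
    intro D l m
    have h0 : pdz (fun w => ∑ t, pdz (pdz c (Sum.inl l)) (Sum.inr t) w * cinv w t m) D z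
        = 0 := by
      rw [KMaux.pdz_congrOn hS (g := fun _ => if l = m then (1:ℝ) else 0)
        (fun w hw => hinv1 w hw l m) D z hz]
      exact KMaux.pdz_const _ D
    rw [KMaux.pdz_sum (fun t => (d2 (Sum.inl l) (Sum.inr t)).fun_mul (hcinvdiff t m)) D] at h0
    have h1 : ∑ t, pdz (fun w => pdz (pdz c (Sum.inl l)) (Sum.inr t) w * cinv w t m) D z
        = ∑ t, (pdz (pdz (pdz c (Sum.inl l)) (Sum.inr t)) D z * cinv z t m
            + pdz (pdz c (Sum.inl l)) (Sum.inr t) z * pdz (fun w => cinv w t m) D z) :=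
      Finset.sum_congr rfl fun t _ =>
        KMaux.pdz_mul (d2 (Sum.inl l) (Sum.inr t)) (hcinvdiff t m) D
    rw [h1, Finset.sum_add_distrib] at h0
    exact h0
  have hDcol : ∀ (D : Fin n ⊕ Fin n) (l m : Fin n),
      ∑ t, pdz (fun w => cinv w l t) D z * pdz (pdz c (Sum.inl t)) (Sum.inr m) z
        + ∑ t, cinv z l t * pdz (pdz (pdz c (Sum.inl t)) (Sum.inr m)) D z
        = 0 := by
    intro D l m
    have h0 : pdz (fun w => ∑ t, cinv w l t * pdz (pdz c (Sum.inl t)) (Sum.inr m) w) D z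
        = 0 := by
      rw [KMaux.pdz_congrOn hS (g := fun _ => if l = m then (1:ℝ) else 0)
        (fun w hw => hinv2 w hw l m) D z hz]
      exact KMaux.pdz_const _ D
    rw [KMaux.pdz_sum (fun t => (hcinvdiff l t).fun_mul (d2 (Sum.inl t) (Sum.inr m))) D] at h0
    have h1 : ∑ t, pdz (fun w => cinv w l t * pdz (pdz c (Sum.inl t)) (Sum.inr m) w) D z
        = ∑ t, (pdz (fun w => cinv w l t) D z * pdz (pdz c (Sum.inl t)) (Sum.inr m) z
            + cinv z l t * pdz (pdz (pdz c (Sum.inl t)) (Sum.inr m)) D z) :=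
      Finset.sum_congr rfl fun t _ =>
        KMaux.pdz_mul (hcinvdiff l t) (d2 (Sum.inl t) (Sum.inr m)) D
    rw [h1, Finset.sum_add_distrib] at h0
    exact h0
  -- explicit derivative of the inverse
  have hcinvD : ∀ (D : Fin n ⊕ Fin n) (q t : Fin n),
      pdz (fun w => cinv w q t) D z
        = -∑ p, ∑ m, cinv z q p * pdz (pdz (pdz c (Sum.inl p)) (Sum.inr m)) D z
            * cinv z m t := by
    intro D q t
    have step1 : ∀ m : Fin n,
        ∑ t', pdz (fun w => cinv w q t') D z * pdz (pdz c (Sum.inl t')) (Sum.inr m) z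
          = -∑ t', cinv z q t' * pdz (pdz (pdz c (Sum.inl t')) (Sum.inr m)) D z :=
      fun m => eq_neg_of_add_eq_zero_left (hDcol D q m)
    calc pdz (fun w => cinv w q t) D z
        = ∑ t', pdz (fun w => cinv w q t') D z * (if t' = t then 1 else 0) := by simp
      _ = ∑ t', pdz (fun w => cinv w q t') D z
            * ∑ m, pdz (pdz c (Sum.inl t')) (Sum.inr m) z * cinv z m t :=
          Finset.sum_congr rfl fun t' _ => by rw [hinv1 z hz t' t]
      _ = ∑ t', ∑ m, pdz (fun w => cinv w q t') D z
            * (pdz (pdz c (Sum.inl t')) (Sum.inr m) z * cinv z m t) :=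
          Finset.sum_congr rfl fun t' _ => Finset.mul_sum _ _ _
      _ = ∑ m, ∑ t', pdz (fun w => cinv w q t') D z
            * (pdz (pdz c (Sum.inl t')) (Sum.inr m) z * cinv z m t) := Finset.sum_comm
      _ = ∑ m, (∑ t', pdz (fun w => cinv w q t') D z
            * pdz (pdz c (Sum.inl t')) (Sum.inr m) z) * cinv z m t := by
          refine Finset.sum_congr rfl fun m _ => ?_
          rw [Finset.sum_mul]
          exact Finset.sum_congr rfl fun t' _ => by ring
      _ = ∑ m, (-∑ t', cinv z q t'
            * pdz (pdz (pdz c (Sum.inl t')) (Sum.inr m)) D z) * cinv z m t :=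
          Finset.sum_congr rfl fun m _ => by rw [step1 m]
      _ = -∑ p, ∑ m, cinv z q p * pdz (pdz (pdz c (Sum.inl p)) (Sum.inr m)) D z
            * cinv z m t := by
          simp only [neg_mul, Finset.sum_neg_distrib]
          congr 1
          calc ∑ m, (∑ t', cinv z q t'
                * pdz (pdz (pdz c (Sum.inl t')) (Sum.inr m)) D z) * cinv z m t
              = ∑ m, ∑ t', cinv z q t'
                * pdz (pdz (pdz c (Sum.inl t')) (Sum.inr m)) D z * cinv z m t :=
              Finset.sum_congr rfl fun m _ => Finset.sum_mul _ _ _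
            _ = ∑ p, ∑ m, cinv z q p * pdz (pdz (pdz c (Sum.inl p)) (Sum.inr m)) D z
                * cinv z m t := Finset.sum_comm
  -- derivative of the barred Christoffel symbols
  have hderR : ∀ (D : Fin n ⊕ Fin n) (b' c' t : Fin n),
      pdz (fun w => Γ w (Sum.inr b') (Sum.inr c') (Sum.inr t)) D z
        = ∑ m, (pdz (fun w => cinv w t m) D z
              * pdz (pdz (pdz c (Sum.inl m)) (Sum.inr b')) (Sum.inr c') z
            + cinv z t m
              * pdz (pdz (pdz (pdz c (Sum.inl m)) (Sum.inr b')) (Sum.inr c')) D z) := by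
    intro D b' c' t
    rw [KMaux.pdz_congrOn hS
      (g := fun w => ∑ m, cinv w t m * pdz (pdz (pdz c (Sum.inl m)) (Sum.inr b')) (Sum.inr c') w)
      (fun w hw => hΓ2 w hw b' c' t) D z hz]
    rw [KMaux.pdz_sum (fun m => (hcinvdiff t m).fun_mul (d3 _ _ _)) D]
    exact Finset.sum_congr rfl fun m _ => KMaux.pdz_mul (hcinvdiff t m) (d3 _ _ _) D
  -- derivative of the unbarred Christoffel symbols
  have hderL : ∀ (D : Fin n ⊕ Fin n) (b' c' t : Fin n),
      pdz (fun w => Γ w (Sum.inl b') (Sum.inl c') (Sum.inl t)) D z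
        = ∑ m, (pdz (pdz (pdz (pdz c (Sum.inl b')) (Sum.inl c')) (Sum.inr m)) D z
              * cinv z m t
            + pdz (pdz (pdz c (Sum.inl b')) (Sum.inl c')) (Sum.inr m) z
              * pdz (fun w => cinv w m t) D z) := by
    intro D b' c' t
    rw [KMaux.pdz_congrOn hS
      (g := fun w => ∑ m, pdz (pdz (pdz c (Sum.inl b')) (Sum.inl c')) (Sum.inr m) w * cinv w m t)
      (fun w hw => hΓ1 w hw b' c' t) D z hz]
    rw [KMaux.pdz_sum (fun m => (d3 _ _ _).fun_mul (hcinvdiff m t)) D]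
    exact Finset.sum_congr rfl fun m _ => KMaux.pdz_mul (d3 _ _ _) (hcinvdiff m t) D
  -- flatness of the all-barred curvature
  have flatR : ∀ a b e t : Fin n, Rup z (Sum.inr a) (Sum.inr b) (Sum.inr e) (Sum.inr t) = 0 := by
    intro a b e t
    have Tsym : ∀ (m i j : Fin n),
        pdz (pdz (pdz c (Sum.inl m)) (Sum.inr i)) (Sum.inr j) z
          = pdz (pdz (pdz c (Sum.inl m)) (Sum.inr j)) (Sum.inr i) z :=
      fun m i j => sw3o (Sum.inl m) (Sum.inr i) (Sum.inr j) z hz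
    have Psym : ∀ (m b' e' a' : Fin n),
        pdz (pdz (pdz (pdz c (Sum.inl m)) (Sum.inr b')) (Sum.inr e')) (Sum.inr a') z
          = pdz (pdz (pdz (pdz c (Sum.inl m)) (Sum.inr a')) (Sum.inr e')) (Sum.inr b') z := by
      intro m b' e' a'
      rw [sw4o (Sum.inl m) (Sum.inr b') (Sum.inr e') (Sum.inr a') z hz]
      rw [sw4m (Sum.inl m) (Sum.inr b') (Sum.inr a') (Sum.inr e') z hz]
      rw [sw4o (Sum.inl m) (Sum.inr a') (Sum.inr b') (Sum.inr e') z hz]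
    have key : ∀ d l1 l2 : Fin n,
        pdz (fun w => Γ w (Sum.inr l1) (Sum.inr l2) (Sum.inr t)) (Sum.inr d) z
          = -(∑ s, (∑ m, cinv z s m
                  * pdz (pdz (pdz c (Sum.inl m)) (Sum.inr l1)) (Sum.inr l2) z)
                * (∑ p, cinv z t p
                  * pdz (pdz (pdz c (Sum.inl p)) (Sum.inr d)) (Sum.inr s) z))
            + ∑ m, cinv z t m
                * pdz (pdz (pdz (pdz c (Sum.inl m)) (Sum.inr l1)) (Sum.inr l2)) (Sum.inr d) z := by
      intro d l1 l2
      rw [hderR (Sum.inr d) l1 l2 t, Finset.sum_add_distrib]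
      congr 1
      calc ∑ m, pdz (fun w => cinv w t m) (Sum.inr d) z
              * pdz (pdz (pdz c (Sum.inl m)) (Sum.inr l1)) (Sum.inr l2) z
          = ∑ m, (-∑ p, ∑ s, cinv z t p
                * pdz (pdz (pdz c (Sum.inl p)) (Sum.inr d)) (Sum.inr s) z * cinv z s m)
              * pdz (pdz (pdz c (Sum.inl m)) (Sum.inr l1)) (Sum.inr l2) z := by
            refine Finset.sum_congr rfl fun m _ => ?_
            rw [hcinvD (Sum.inr d) t m]
            congr 2
            refine Finset.sum_congr rfl fun p _ => Finset.sum_congr rfl fun s _ => ?_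
            rw [Tsym p s d]
        _ = -∑ m, ∑ p, ∑ s, (cinv z t p
                * pdz (pdz (pdz c (Sum.inl p)) (Sum.inr d)) (Sum.inr s) z * cinv z s m)
              * pdz (pdz (pdz c (Sum.inl m)) (Sum.inr l1)) (Sum.inr l2) z := by
            simp only [neg_mul, Finset.sum_neg_distrib]
            congr 1
            refine Finset.sum_congr rfl fun m _ => ?_
            rw [Finset.sum_mul]
            exact Finset.sum_congr rfl fun p _ => Finset.sum_mul _ _ _
        _ = -∑ s, ∑ m, ∑ p, (cinv z t p
                * pdz (pdz (pdz c (Sum.inl p)) (Sum.inr d)) (Sum.inr s) z * cinv z s m)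
              * pdz (pdz (pdz c (Sum.inl m)) (Sum.inr l1)) (Sum.inr l2) z := by
            rw [KMaux.sum_comm3']
        _ = -(∑ s, (∑ m, cinv z s m
                * pdz (pdz (pdz c (Sum.inl m)) (Sum.inr l1)) (Sum.inr l2) z)
              * (∑ p, cinv z t p
                * pdz (pdz (pdz c (Sum.inl p)) (Sum.inr d)) (Sum.inr s) z)) := by
            congr 1
            refine Finset.sum_congr rfl fun s _ => ?_
            rw [Finset.sum_mul_sum]
            exact Finset.sum_congr rfl fun m _ => Finset.sum_congr rfl fun p _ => by ring
    rw [hRup]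
    have q1 : ∑ m' : Fin n ⊕ Fin n, Γ z (Sum.inr b) (Sum.inr e) m' * Γ z (Sum.inr a) m' (Sum.inr t)
        = ∑ s, (∑ m, cinv z s m * pdz (pdz (pdz c (Sum.inl m)) (Sum.inr b)) (Sum.inr e) z)
            * (∑ p, cinv z t p * pdz (pdz (pdz c (Sum.inl p)) (Sum.inr a)) (Sum.inr s) z) := by
      rw [Fintype.sum_sum_type]
      rw [Finset.sum_eq_zero (fun s _ =>
        show Γ z (Sum.inr b) (Sum.inr e) (Sum.inl s) * Γ z (Sum.inr a) (Sum.inl s) (Sum.inr t) = 0 by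
          rw [hGmix (Sum.inr b) (Sum.inr e) (Sum.inl s) (by simp) z hz, zero_mul]), zero_add]
      exact Finset.sum_congr rfl fun s _ => by rw [hΓ2 z hz b e s, hΓ2 z hz a s t]
    have q2 : ∑ m' : Fin n ⊕ Fin n, Γ z (Sum.inr a) (Sum.inr e) m' * Γ z (Sum.inr b) m' (Sum.inr t)
        = ∑ s, (∑ m, cinv z s m * pdz (pdz (pdz c (Sum.inl m)) (Sum.inr a)) (Sum.inr e) z)
            * (∑ p, cinv z t p * pdz (pdz (pdz c (Sum.inl p)) (Sum.inr b)) (Sum.inr s) z) := by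
      rw [Fintype.sum_sum_type]
      rw [Finset.sum_eq_zero (fun s _ =>
        show Γ z (Sum.inr a) (Sum.inr e) (Sum.inl s) * Γ z (Sum.inr b) (Sum.inl s) (Sum.inr t) = 0 by
          rw [hGmix (Sum.inr a) (Sum.inr e) (Sum.inl s) (by simp) z hz, zero_mul]), zero_add]
      exact Finset.sum_congr rfl fun s _ => by rw [hΓ2 z hz a e s, hΓ2 z hz b s t]
    rw [key a b e, key b a e, q1, q2]
    have hW : ∑ m, cinv z t m
          * pdz (pdz (pdz (pdz c (Sum.inl m)) (Sum.inr b)) (Sum.inr e)) (Sum.inr a) z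
        = ∑ m, cinv z t m
          * pdz (pdz (pdz (pdz c (Sum.inl m)) (Sum.inr a)) (Sum.inr e)) (Sum.inr b) z :=
      Finset.sum_congr rfl fun m _ => by rw [Psym m b e a]
    rw [hW]
    ring
  -- flatness of the all-unbarred curvature
  have flatL : ∀ a b e t : Fin n, Rup z (Sum.inl a) (Sum.inl b) (Sum.inl e) (Sum.inl t) = 0 := by
    intro a b e t
    have Psym : ∀ (b' e' m a' : Fin n),
        pdz (pdz (pdz (pdz c (Sum.inl b')) (Sum.inl e')) (Sum.inr m)) (Sum.inl a') z
          = pdz (pdz (pdz (pdz c (Sum.inl a')) (Sum.inl e')) (Sum.inr m)) (Sum.inl b') z := by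
      intro b' e' m a'
      rw [sw4o (Sum.inl b') (Sum.inl e') (Sum.inr m) (Sum.inl a') z hz]
      rw [sw4m (Sum.inl b') (Sum.inl e') (Sum.inl a') (Sum.inr m) z hz]
      rw [sw4i (Sum.inl b') (Sum.inl a') (Sum.inl e') (Sum.inr m) z hz]
      rw [sw4m (Sum.inl a') (Sum.inl b') (Sum.inl e') (Sum.inr m) z hz]
      rw [sw4o (Sum.inl a') (Sum.inl e') (Sum.inl b') (Sum.inr m) z hz]
    have key : ∀ d l1 l2 : Fin n,
        pdz (fun w => Γ w (Sum.inl l1) (Sum.inl l2) (Sum.inl t)) (Sum.inl d) z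
          = -(∑ s, (∑ m, pdz (pdz (pdz c (Sum.inl l1)) (Sum.inl l2)) (Sum.inr m) z
                  * cinv z m s)
                * (∑ q, pdz (pdz (pdz c (Sum.inl d)) (Sum.inl s)) (Sum.inr q) z
                  * cinv z q t))
            + ∑ m, pdz (pdz (pdz (pdz c (Sum.inl l1)) (Sum.inl l2)) (Sum.inr m)) (Sum.inl d) z
                * cinv z m t := by
      intro d l1 l2
      rw [hderL (Sum.inl d) l1 l2 t, Finset.sum_add_distrib, add_comm]
      congr 1
      calc ∑ m, pdz (pdz (pdz c (Sum.inl l1)) (Sum.inl l2)) (Sum.inr m) z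
              * pdz (fun w => cinv w m t) (Sum.inl d) z
          = ∑ m, pdz (pdz (pdz c (Sum.inl l1)) (Sum.inl l2)) (Sum.inr m) z
              * (-∑ p, ∑ s, cinv z m p
                * pdz (pdz (pdz c (Sum.inl d)) (Sum.inl p)) (Sum.inr s) z * cinv z s t) := by
            refine Finset.sum_congr rfl fun m _ => ?_
            rw [hcinvD (Sum.inl d) m t]
            congr 2
            refine Finset.sum_congr rfl fun p _ => Finset.sum_congr rfl fun s _ => ?_
            rw [sw3o (Sum.inl p) (Sum.inr s) (Sum.inl d) z hz,
              sw3i (Sum.inl p) (Sum.inl d) (Sum.inr s) z hz]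
        _ = -∑ m, ∑ p, ∑ s, pdz (pdz (pdz c (Sum.inl l1)) (Sum.inl l2)) (Sum.inr m) z
              * (cinv z m p
                * pdz (pdz (pdz c (Sum.inl d)) (Sum.inl p)) (Sum.inr s) z * cinv z s t) := by
            simp only [mul_neg, Finset.sum_neg_distrib]
            congr 1
            refine Finset.sum_congr rfl fun m _ => ?_
            rw [Finset.mul_sum]
            exact Finset.sum_congr rfl fun p _ => Finset.mul_sum _ _ _
        _ = -∑ p, ∑ m, ∑ s, pdz (pdz (pdz c (Sum.inl l1)) (Sum.inl l2)) (Sum.inr m) z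
              * (cinv z m p
                * pdz (pdz (pdz c (Sum.inl d)) (Sum.inl p)) (Sum.inr s) z * cinv z s t) := by
            rw [Finset.sum_comm]
        _ = -(∑ s, (∑ m, pdz (pdz (pdz c (Sum.inl l1)) (Sum.inl l2)) (Sum.inr m) z
                * cinv z m s)
              * (∑ q, pdz (pdz (pdz c (Sum.inl d)) (Sum.inl s)) (Sum.inr q) z
                * cinv z q t)) := by
            congr 1
            refine Finset.sum_congr rfl fun p _ => ?_
            rw [Finset.sum_mul_sum]
            exact Finset.sum_congr rfl fun m _ => Finset.sum_congr rfl fun q _ => by ring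
    rw [hRup]
    have q1 : ∑ m' : Fin n ⊕ Fin n, Γ z (Sum.inl b) (Sum.inl e) m' * Γ z (Sum.inl a) m' (Sum.inl t)
        = ∑ s, (∑ m, pdz (pdz (pdz c (Sum.inl b)) (Sum.inl e)) (Sum.inr m) z * cinv z m s)
            * (∑ q, pdz (pdz (pdz c (Sum.inl a)) (Sum.inl s)) (Sum.inr q) z * cinv z q t) := by
      rw [Fintype.sum_sum_type]
      rw [Finset.sum_eq_zero (fun s _ =>
        show Γ z (Sum.inl b) (Sum.inl e) (Sum.inr s) * Γ z (Sum.inl a) (Sum.inr s) (Sum.inl t) = 0 by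
          rw [hGmix (Sum.inl b) (Sum.inl e) (Sum.inr s) (by simp) z hz, zero_mul]), add_zero]
      exact Finset.sum_congr rfl fun s _ => by rw [hΓ1 z hz b e s, hΓ1 z hz a s t]
    have q2 : ∑ m' : Fin n ⊕ Fin n, Γ z (Sum.inl a) (Sum.inl e) m' * Γ z (Sum.inl b) m' (Sum.inl t)
        = ∑ s, (∑ m, pdz (pdz (pdz c (Sum.inl a)) (Sum.inl e)) (Sum.inr m) z * cinv z m s)
            * (∑ q, pdz (pdz (pdz c (Sum.inl b)) (Sum.inl s)) (Sum.inr q) z * cinv z q t) := by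
      rw [Fintype.sum_sum_type]
      rw [Finset.sum_eq_zero (fun s _ =>
        show Γ z (Sum.inl a) (Sum.inl e) (Sum.inr s) * Γ z (Sum.inl b) (Sum.inr s) (Sum.inl t) = 0 by
          rw [hGmix (Sum.inl a) (Sum.inl e) (Sum.inr s) (by simp) z hz, zero_mul]), add_zero]
      exact Finset.sum_congr rfl fun s _ => by rw [hΓ1 z hz a e s, hΓ1 z hz b s t]
    rw [key a b e, key b a e, q1, q2]
    have hW : ∑ m, pdz (pdz (pdz (pdz c (Sum.inl b)) (Sum.inl e)) (Sum.inr m)) (Sum.inl a) z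
          * cinv z m t
        = ∑ m, pdz (pdz (pdz (pdz c (Sum.inl a)) (Sum.inl e)) (Sum.inr m)) (Sum.inl b) z
          * cinv z m t :=
      Finset.sum_congr rfl fun m _ => by rw [Psym b e m a]
    rw [hW]
    ring
  -- vanishing of Rup for wrong index counts
  have hRupVan : ∀ (A B C m : Fin n ⊕ Fin n),
      ((if A.isRight then 1 else 0) + (if B.isRight then 1 else 0)
        + (if C.isRight then 1 else 0) : ℕ) ≠ 1 + (if m.isRight then 1 else 0) →
      Rup z A B C m = 0 := by
    have hvan : ∀ A B C E : Fin n ⊕ Fin n,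
        ¬(B.isRight = C.isRight ∧ C.isRight = E.isRight) →
        ¬(A.isRight = C.isRight ∧ C.isRight = E.isRight) →
        (∀ s : Fin n ⊕ Fin n, Γ z B C s = 0 ∨ Γ z A s E = 0) →
        (∀ s : Fin n ⊕ Fin n, Γ z A C s = 0 ∨ Γ z B s E = 0) →
        Rup z A B C E = 0 := by
      intro A B C E h1 h2 h3 h4
      rw [hRup]
      rw [KMaux.pdz_zeroOn hS (fun w hw => hGmix B C E h1 w hw) A hz]
      rw [KMaux.pdz_zeroOn hS (fun w hw => hGmix A C E h2 w hw) B hz]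
      rw [Finset.sum_eq_zero (fun s _ => show Γ z B C s * Γ z A s E = 0 by
        rcases h3 s with h | h <;> simp [h])]
      rw [Finset.sum_eq_zero (fun s _ => show Γ z A C s * Γ z B s E = 0 by
        rcases h4 s with h | h <;> simp [h])]
      ring
    intro A B C m hcond
    rcases A with a | a <;> rcases B with b | b <;> rcases C with e | e <;> rcases m with t | t
    · exact flatL a b e t
    · refine hvan _ _ _ _ ?_ ?_ ?_ ?_
      · simp
      · simp
      · intro s
        rcases s with s | s <;>
          first
            | (refine Or.inl (hGmix _ _ _ ?_ z hz); simp; done)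
            | (refine Or.inr (hGmix _ _ _ ?_ z hz); simp; done)
      · intro s
        rcases s with s | s <;>
          first
            | (refine Or.inl (hGmix _ _ _ ?_ z hz); simp; done)
            | (refine Or.inr (hGmix _ _ _ ?_ z hz); simp; done)
    · simp at hcond
    · refine hvan _ _ _ _ ?_ ?_ ?_ ?_
      · simp
      · simp
      · intro s
        rcases s with s | s <;>
          first
            | (refine Or.inl (hGmix _ _ _ ?_ z hz); simp; done)
            | (refine Or.inr (hGmix _ _ _ ?_ z hz); simp; done)
      · intro s
        rcases s with s | s <;>
          first
            | (refine Or.inl (hGmix _ _ _ ?_ z hz); simp; done)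
            | (refine Or.inr (hGmix _ _ _ ?_ z hz); simp; done)
    · simp at hcond
    · refine hvan _ _ _ _ ?_ ?_ ?_ ?_
      · simp
      · simp
      · intro s
        rcases s with s | s <;>
          first
            | (refine Or.inl (hGmix _ _ _ ?_ z hz); simp; done)
            | (refine Or.inr (hGmix _ _ _ ?_ z hz); simp; done)
      · intro s
        rcases s with s | s <;>
          first
            | (refine Or.inl (hGmix _ _ _ ?_ z hz); simp; done)
            | (refine Or.inr (hGmix _ _ _ ?_ z hz); simp; done)
    · refine hvan _ _ _ _ ?_ ?_ ?_ ?_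
      · simp
      · simp
      · intro s
        rcases s with s | s <;>
          first
            | (refine Or.inl (hGmix _ _ _ ?_ z hz); simp; done)
            | (refine Or.inr (hGmix _ _ _ ?_ z hz); simp; done)
      · intro s
        rcases s with s | s <;>
          first
            | (refine Or.inl (hGmix _ _ _ ?_ z hz); simp; done)
            | (refine Or.inr (hGmix _ _ _ ?_ z hz); simp; done)
    · simp at hcond
    · simp at hcond
    · refine hvan _ _ _ _ ?_ ?_ ?_ ?_
      · simp
      · simp
      · intro s
        rcases s with s | s <;>
          first
            | (refine Or.inl (hGmix _ _ _ ?_ z hz); simp; done)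
            | (refine Or.inr (hGmix _ _ _ ?_ z hz); simp; done)
      · intro s
        rcases s with s | s <;>
          first
            | (refine Or.inl (hGmix _ _ _ ?_ z hz); simp; done)
            | (refine Or.inr (hGmix _ _ _ ?_ z hz); simp; done)
    · refine hvan _ _ _ _ ?_ ?_ ?_ ?_
      · simp
      · simp
      · intro s
        rcases s with s | s <;>
          first
            | (refine Or.inl (hGmix _ _ _ ?_ z hz); simp; done)
            | (refine Or.inr (hGmix _ _ _ ?_ z hz); simp; done)
      · intro s
        rcases s with s | s <;>
          first
            | (refine Or.inl (hGmix _ _ _ ?_ z hz); simp; done)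
            | (refine Or.inr (hGmix _ _ _ ?_ z hz); simp; done)
    · simp at hcond
    · refine hvan _ _ _ _ ?_ ?_ ?_ ?_
      · simp
      · simp
      · intro s
        rcases s with s | s <;>
          first
            | (refine Or.inl (hGmix _ _ _ ?_ z hz); simp; done)
            | (refine Or.inr (hGmix _ _ _ ?_ z hz); simp; done)
      · intro s
        rcases s with s | s <;>
          first
            | (refine Or.inl (hGmix _ _ _ ?_ z hz); simp; done)
            | (refine Or.inr (hGmix _ _ _ ?_ z hz); simp; done)
    · simp at hcond
    · refine hvan _ _ _ _ ?_ ?_ ?_ ?_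
      · simp
      · simp
      · intro s
        rcases s with s | s <;>
          first
            | (refine Or.inl (hGmix _ _ _ ?_ z hz); simp; done)
            | (refine Or.inr (hGmix _ _ _ ?_ z hz); simp; done)
      · intro s
        rcases s with s | s <;>
          first
            | (refine Or.inl (hGmix _ _ _ ?_ z hz); simp; done)
            | (refine Or.inr (hGmix _ _ _ ?_ z hz); simp; done)
    · exact flatR a b e t
  constructor
  · intro i j k l
    rw [hRlow, Fintype.sum_sum_type]
    rw [Finset.sum_eq_zero (fun s _ =>
      show Rup z (Sum.inl i) (Sum.inr j) (Sum.inr k) (Sum.inl s) * H z (Sum.inl s) (Sum.inl l) = 0 by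
        rw [hH1 z s l, mul_zero]), zero_add]
    have RupM : ∀ t : Fin n, Rup z (Sum.inl i) (Sum.inr j) (Sum.inr k) (Sum.inr t)
        = ∑ m, (pdz (fun w => cinv w t m) (Sum.inl i) z
              * pdz (pdz (pdz c (Sum.inl m)) (Sum.inr j)) (Sum.inr k) z
            + cinv z t m
              * pdz (pdz (pdz (pdz c (Sum.inl m)) (Sum.inr j)) (Sum.inr k)) (Sum.inl i) z) := by
      intro t
      rw [hRup]
      rw [KMaux.pdz_zeroOn hS
        (fun w hw => hGmix (Sum.inl i) (Sum.inr k) (Sum.inr t) (by simp) w hw) (Sum.inr j) hz]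
      rw [Finset.sum_eq_zero (fun m' (_ : m' ∈ Finset.univ) =>
        show Γ z (Sum.inr j) (Sum.inr k) m' * Γ z (Sum.inl i) m' (Sum.inr t) = 0 by
          rcases m' with s | s
          · rw [hGmix (Sum.inl i) (Sum.inl s) (Sum.inr t) (by simp) z hz, mul_zero]
          · rw [hGmix (Sum.inl i) (Sum.inr s) (Sum.inr t) (by simp) z hz, mul_zero])]
      rw [Finset.sum_eq_zero (fun m' (_ : m' ∈ Finset.univ) =>
        show Γ z (Sum.inl i) (Sum.inr k) m' * Γ z (Sum.inr j) m' (Sum.inr t) = 0 by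
          rw [hGmix (Sum.inl i) (Sum.inr k) m' (by simp) z hz, zero_mul])]
      rw [hderR (Sum.inl i) j k t]
      ring
    have factE : ∑ t, (∑ m, pdz (fun w => cinv w t m) (Sum.inl i) z
            * pdz (pdz (pdz c (Sum.inl m)) (Sum.inr j)) (Sum.inr k) z)
          * pdz (pdz c (Sum.inl l)) (Sum.inr t) z
        = -∑ β, ∑ a, pdz (pdz (pdz c (Sum.inl i)) (Sum.inl l)) (Sum.inr β) z
            * cinv z β a * pdz (pdz (pdz c (Sum.inl a)) (Sum.inr j)) (Sum.inr k) z := by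
      calc ∑ t, (∑ m, pdz (fun w => cinv w t m) (Sum.inl i) z
              * pdz (pdz (pdz c (Sum.inl m)) (Sum.inr j)) (Sum.inr k) z)
            * pdz (pdz c (Sum.inl l)) (Sum.inr t) z
          = ∑ t, ∑ m, (pdz (pdz c (Sum.inl l)) (Sum.inr t) z
                * pdz (fun w => cinv w t m) (Sum.inl i) z)
              * pdz (pdz (pdz c (Sum.inl m)) (Sum.inr j)) (Sum.inr k) z := by
            refine Finset.sum_congr rfl fun t _ => ?_
            rw [Finset.sum_mul]
            exact Finset.sum_congr rfl fun m _ => by ring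
        _ = ∑ m, ∑ t, (pdz (pdz c (Sum.inl l)) (Sum.inr t) z
                * pdz (fun w => cinv w t m) (Sum.inl i) z)
              * pdz (pdz (pdz c (Sum.inl m)) (Sum.inr j)) (Sum.inr k) z := Finset.sum_comm
        _ = ∑ m, (∑ t, pdz (pdz c (Sum.inl l)) (Sum.inr t) z
                * pdz (fun w => cinv w t m) (Sum.inl i) z)
              * pdz (pdz (pdz c (Sum.inl m)) (Sum.inr j)) (Sum.inr k) z :=
            Finset.sum_congr rfl fun m _ => (Finset.sum_mul _ _ _).symm
        _ = ∑ m, (-∑ t, pdz (pdz (pdz c (Sum.inl i)) (Sum.inl l)) (Sum.inr t) z * cinv z t m)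
              * pdz (pdz (pdz c (Sum.inl m)) (Sum.inr j)) (Sum.inr k) z := by
            refine Finset.sum_congr rfl fun m _ => ?_
            congr 1
            rw [eq_neg_of_add_eq_zero_right (hDrow (Sum.inl i) l m)]
            congr 1
            refine Finset.sum_congr rfl fun t' _ => ?_
            rw [sw3o (Sum.inl l) (Sum.inr t') (Sum.inl i) z hz,
              sw3i (Sum.inl l) (Sum.inl i) (Sum.inr t') z hz]
        _ = -∑ β, ∑ a, pdz (pdz (pdz c (Sum.inl i)) (Sum.inl l)) (Sum.inr β) z
              * cinv z β a * pdz (pdz (pdz c (Sum.inl a)) (Sum.inr j)) (Sum.inr k) z := by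
            simp only [neg_mul, Finset.sum_neg_distrib]
            congr 1
            calc ∑ m, (∑ t', pdz (pdz (pdz c (Sum.inl i)) (Sum.inl l)) (Sum.inr t') z
                    * cinv z t' m)
                  * pdz (pdz (pdz c (Sum.inl m)) (Sum.inr j)) (Sum.inr k) z
                = ∑ m, ∑ t', pdz (pdz (pdz c (Sum.inl i)) (Sum.inl l)) (Sum.inr t') z
                    * cinv z t' m
                    * pdz (pdz (pdz c (Sum.inl m)) (Sum.inr j)) (Sum.inr k) z :=
                  Finset.sum_congr rfl fun m _ => Finset.sum_mul _ _ _
              _ = ∑ β, ∑ a, pdz (pdz (pdz c (Sum.inl i)) (Sum.inl l)) (Sum.inr β) z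
                    * cinv z β a
                    * pdz (pdz (pdz c (Sum.inl a)) (Sum.inr j)) (Sum.inr k) z :=
                  Finset.sum_comm
    have factF : ∑ t, (∑ m, cinv z t m
            * pdz (pdz (pdz (pdz c (Sum.inl m)) (Sum.inr j)) (Sum.inr k)) (Sum.inl i) z)
          * pdz (pdz c (Sum.inl l)) (Sum.inr t) z
        = pdz (pdz (pdz (pdz c (Sum.inl i)) (Sum.inl l)) (Sum.inr j)) (Sum.inr k) z := by
      calc ∑ t, (∑ m, cinv z t m
              * pdz (pdz (pdz (pdz c (Sum.inl m)) (Sum.inr j)) (Sum.inr k)) (Sum.inl i) z)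
            * pdz (pdz c (Sum.inl l)) (Sum.inr t) z
          = ∑ t, ∑ m, (pdz (pdz c (Sum.inl l)) (Sum.inr t) z * cinv z t m)
              * pdz (pdz (pdz (pdz c (Sum.inl m)) (Sum.inr j)) (Sum.inr k)) (Sum.inl i) z := by
            refine Finset.sum_congr rfl fun t _ => ?_
            rw [Finset.sum_mul]
            exact Finset.sum_congr rfl fun m _ => by ring
        _ = ∑ m, ∑ t, (pdz (pdz c (Sum.inl l)) (Sum.inr t) z * cinv z t m)
              * pdz (pdz (pdz (pdz c (Sum.inl m)) (Sum.inr j)) (Sum.inr k)) (Sum.inl i) z :=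
            Finset.sum_comm
        _ = ∑ m, (∑ t, pdz (pdz c (Sum.inl l)) (Sum.inr t) z * cinv z t m)
              * pdz (pdz (pdz (pdz c (Sum.inl m)) (Sum.inr j)) (Sum.inr k)) (Sum.inl i) z :=
            Finset.sum_congr rfl fun m _ => (Finset.sum_mul _ _ _).symm
        _ = ∑ m, (if l = m then (1:ℝ) else 0)
              * pdz (pdz (pdz (pdz c (Sum.inl m)) (Sum.inr j)) (Sum.inr k)) (Sum.inl i) z :=
            Finset.sum_congr rfl fun m _ => by rw [hinv1 z hz l m]
        _ = pdz (pdz (pdz (pdz c (Sum.inl l)) (Sum.inr j)) (Sum.inr k)) (Sum.inl i) z := by simp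
        _ = pdz (pdz (pdz (pdz c (Sum.inl i)) (Sum.inl l)) (Sum.inr j)) (Sum.inr k) z := by
            rw [sw4o (Sum.inl l) (Sum.inr j) (Sum.inr k) (Sum.inl i) z hz,
              sw4m (Sum.inl l) (Sum.inr j) (Sum.inl i) (Sum.inr k) z hz,
              sw4i (Sum.inl l) (Sum.inl i) (Sum.inr j) (Sum.inr k) z hz]
    calc ∑ t, Rup z (Sum.inl i) (Sum.inr j) (Sum.inr k) (Sum.inr t) * H z (Sum.inr t) (Sum.inl l)
        = ∑ t, (-(1/2:ℝ)) * ((∑ m, pdz (fun w => cinv w t m) (Sum.inl i) z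
              * pdz (pdz (pdz c (Sum.inl m)) (Sum.inr j)) (Sum.inr k) z)
                * pdz (pdz c (Sum.inl l)) (Sum.inr t) z
            + (∑ m, cinv z t m
              * pdz (pdz (pdz (pdz c (Sum.inl m)) (Sum.inr j)) (Sum.inr k)) (Sum.inl i) z)
                * pdz (pdz c (Sum.inl l)) (Sum.inr t) z) := by
          refine Finset.sum_congr rfl fun t _ => ?_
          rw [RupM t, hH4 z l t]
          simp only [cmix]
          rw [Finset.sum_add_distrib]
          ring
      _ = (-(1/2:ℝ)) * ((∑ t, (∑ m, pdz (fun w => cinv w t m) (Sum.inl i) z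
              * pdz (pdz (pdz c (Sum.inl m)) (Sum.inr j)) (Sum.inr k) z)
                * pdz (pdz c (Sum.inl l)) (Sum.inr t) z)
            + ∑ t, (∑ m, cinv z t m
              * pdz (pdz (pdz (pdz c (Sum.inl m)) (Sum.inr j)) (Sum.inr k)) (Sum.inl i) z)
                * pdz (pdz c (Sum.inl l)) (Sum.inr t) z) := by
          rw [← Finset.mul_sum, Finset.sum_add_distrib]
      _ = (1 / 2) * (-(pdz (pdz (pdz (pdz c (Sum.inl i)) (Sum.inl l)) (Sum.inr j)) (Sum.inr k) z)
            + ∑ β, ∑ a, pdz (pdz (pdz c (Sum.inl i)) (Sum.inl l)) (Sum.inr β) z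
                * cinv z β a
                * pdz (pdz (pdz c (Sum.inl a)) (Sum.inr j)) (Sum.inr k) z) := by
          rw [factE, factF]
          ring
  · -- vanishing coefficients
    intro A B C E hcount
    rw [hRlow, Fintype.sum_sum_type]
    cases E with
    | inl e =>
      have h1 : ∀ s : Fin n, Rup z A B C (Sum.inr s) = 0 := fun s =>
        hRupVan A B C (Sum.inr s) (by simp at hcount ⊢; omega)
      simp [hH1, h1]
    | inr e =>
      have h1 : ∀ s : Fin n, Rup z A B C (Sum.inl s) = 0 := fun s =>
        hRupVan A B C (Sum.inl s) (by simp at hcount ⊢; omega)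
      simp [hH2, h1]
end

section
/- Let G be the graph of an optimal transport map f for a nondegenerate cost c, D the corresponding c-divergence with induced Riemannian metric g, and h the Kim–McCann pseudo-metric on U × V. For any tangent vector v = (a, (Df)a) to G at (p, f(p)), one has h(v, v) = g(a, a); that is, the information-geometric Riemannian metric g is the restriction of h to the tangent spaces of G. -/
/-- the information-geometric metric `g` of the c-divergence is the
restriction of the Kim–McCann pseudo-metric `h` to tangent vectors
`v = (a, Df(p)a)` of the graph `G = {(p, f(p))}`: `h(v, v) = g(a, a)`. -/
theorem metric_restriction {n : ℕ}
    (U V : Set (Fin n → ℝ)) (hU : IsOpen U) (hV : IsOpen V)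
    (c : (Fin n → ℝ) → (Fin n → ℝ) → ℝ)
    (hc : ContDiffOn ℝ (⊤ : ℕ∞) (fun z : (Fin n → ℝ) × (Fin n → ℝ) => c z.1 z.2) (U ×ˢ V))
    (f : (Fin n → ℝ) → (Fin n → ℝ))
    (hf : ContDiffOn ℝ (⊤ : ℕ∞) f U) (hfUV : Set.MapsTo f U V) (hfinj : Set.InjOn f U)
    -- nondegeneracy of the mixed Hessian
    (cinv : (Fin n → ℝ) → (Fin n → ℝ) → Matrix (Fin n) (Fin n) ℝ)
    (hcinv : ∀ x ∈ U, ∀ y ∈ V,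
      (Matrix.of fun i j => pd2 (pd1 c i) j x y) * cinv x y = 1 ∧
      cinv x y * (Matrix.of fun i j => pd2 (pd1 c i) j x y) = 1)
    -- the pseudo-metric h as a quadratic form, h((a,b),(a,b)) = −c_{i:j̄} aⁱ b^{j̄}
    (h : (Fin n → ℝ) → (Fin n → ℝ) → ((Fin n → ℝ) × (Fin n → ℝ)) → ℝ)
    (hh : ∀ p q' a b, h p q' (a, b) = -∑ i, ∑ j, pd2 (pd1 c i) j p q' * a i * b j)
    -- the information-geometric metric g_{ij}(p) = −c_{i:m̄}(p, f p) ∂f^{m̄}/∂pʲ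
    (g : (Fin n → ℝ) → Matrix (Fin n) (Fin n) ℝ)
    (hg : ∀ p ∈ U, ∀ i j : Fin n,
      g p i j = -∑ m, pd2 (pd1 c i) m p (f p) * fderiv ℝ f p (Pi.single j 1) m) :
    ∀ p ∈ U, ∀ a : Fin n → ℝ,
      h p (f p) (a, fderiv ℝ f p a) = ∑ i, ∑ j, g p i j * a i * a j := by
  intro p hp a
  have hL : ∀ m : Fin n, fderiv ℝ f p a m
      = ∑ j, fderiv ℝ f p (Pi.single j 1) m * a j := by
    intro m
    have ha : a = ∑ j : Fin n, a j • (Pi.single j 1 : Fin n → ℝ) := by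
      ext k; simp [Pi.single_apply, mul_comm]
    conv_lhs => rw [ha]
    rw [map_sum]
    simp [mul_comm]
  rw [hh]
  have : ∀ i j : Fin n, g p i j
      = -∑ m, pd2 (pd1 c i) m p (f p) * fderiv ℝ f p (Pi.single j 1) m := hg p hp
  simp only [this, hL, Finset.mul_sum, Finset.sum_mul, neg_mul,
    Finset.sum_neg_distrib, ← Finset.sum_neg_distrib]
  refine Finset.sum_congr rfl fun x _ => ?_
  rw [Finset.sum_comm]
  exact Finset.sum_congr rfl fun m _ => Finset.sum_congr rfl fun y _ => by ring
end

section
/- In the setting of the Kim–McCann metric h on U × V ⊂ ℝⁿ × ℝⁿ and the c-divergence dualistic structure (g, ∇, ∇*) on the graph G of transport, the unnormalized sectional curvatures satisfy, for all vectors X, Y tangent to G at a common point: sec̄_u(X,Y) = (1/2)(sec_u(X,Y) + sec*_u(X,Y)), where sec̄_u(X,Y) = h(R̄(X,Y)Y, X), sec_u(X,Y) = g(R(X,Y)Y, X), and sec*_u(X,Y) = g(R*(X,Y)Y, X). -/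
open Matrix

section AuxSC

variable {n : ℕ} {M : Type*} [AddCommMonoid M]

private lemma nest4SC (f : Fin n → Fin n → Fin n → Fin n → M) :
    ∑ p : Fin n × Fin n × Fin n × Fin n, f p.1 p.2.1 p.2.2.1 p.2.2.2
      = ∑ i, ∑ j, ∑ k, ∑ l, f i j k l := by
  simp only [Fintype.sum_prod_type]

private lemma nest6SC (f : Fin n → Fin n → Fin n → Fin n → Fin n → Fin n → M) :
    ∑ p : Fin n × Fin n × Fin n × Fin n × Fin n × Fin n,
        f p.1 p.2.1 p.2.2.1 p.2.2.2.1 p.2.2.2.2.1 p.2.2.2.2.2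
      = ∑ i, ∑ j, ∑ k, ∑ l, ∑ a, ∑ b, f i j k l a b := by
  simp only [Fintype.sum_prod_type]

private lemma perm4_pairSC (f : Fin n → Fin n → Fin n → Fin n → M) :
    ∑ i, ∑ j, ∑ k, ∑ l, f k l i j = ∑ i, ∑ j, ∑ k, ∑ l, f i j k l := by
  rw [← nest4SC, ← nest4SC f]
  exact Fintype.sum_equiv
    ⟨fun p => (p.2.2.1, p.2.2.2, p.1, p.2.1), fun p => (p.2.2.1, p.2.2.2, p.1, p.2.1),
      fun p => rfl, fun p => rfl⟩ _ _ (fun p => rfl)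

private lemma perm4_swap12SC (f : Fin n → Fin n → Fin n → Fin n → M) :
    ∑ i, ∑ j, ∑ k, ∑ l, f j i k l = ∑ i, ∑ j, ∑ k, ∑ l, f i j k l := by
  rw [← nest4SC, ← nest4SC f]
  exact Fintype.sum_equiv
    ⟨fun p => (p.2.1, p.1, p.2.2), fun p => (p.2.1, p.1, p.2.2),
      fun p => rfl, fun p => rfl⟩ _ _ (fun p => rfl)

private lemma perm4_swap34SC (f : Fin n → Fin n → Fin n → Fin n → M) :
    ∑ i, ∑ j, ∑ k, ∑ l, f i j l k = ∑ i, ∑ j, ∑ k, ∑ l, f i j k l := by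
  rw [← nest4SC, ← nest4SC f]
  exact Fintype.sum_equiv
    ⟨fun p => (p.1, p.2.1, p.2.2.2, p.2.2.1), fun p => (p.1, p.2.1, p.2.2.2, p.2.2.1),
      fun p => rfl, fun p => rfl⟩ _ _ (fun p => rfl)

private lemma permA1SC (f : Fin n → Fin n → Fin n → Fin n → Fin n → Fin n → M) :
    ∑ i, ∑ j, ∑ k, ∑ l, ∑ a, ∑ b, f i a b k j l
      = ∑ i, ∑ j, ∑ k, ∑ l, ∑ a, ∑ b, f i j k l a b := by
  rw [← nest6SC, ← nest6SC f]
  exact Fintype.sum_equiv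
    ⟨fun p => (p.1, p.2.2.2.2.1, p.2.2.2.2.2, p.2.2.1, p.2.1, p.2.2.2.1),
     fun q => (q.1, q.2.2.2.2.1, q.2.2.2.1, q.2.2.2.2.2, q.2.1, q.2.2.1),
      fun p => rfl, fun p => rfl⟩ _ _ (fun p => rfl)

private lemma permA2SC (f : Fin n → Fin n → Fin n → Fin n → Fin n → Fin n → M) :
    ∑ i, ∑ j, ∑ k, ∑ l, ∑ a, ∑ b, f j a b k i l
      = ∑ i, ∑ j, ∑ k, ∑ l, ∑ a, ∑ b, f i j k l a b := by
  rw [← nest6SC, ← nest6SC f]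
  exact Fintype.sum_equiv
    ⟨fun p => (p.2.1, p.2.2.2.2.1, p.2.2.2.2.2, p.2.2.1, p.1, p.2.2.2.1),
     fun q => (q.2.2.2.2.1, q.1, q.2.2.2.1, q.2.2.2.2.2, q.2.1, q.2.2.1),
      fun p => rfl, fun p => rfl⟩ _ _ (fun p => rfl)

private lemma permB1SC (f : Fin n → Fin n → Fin n → Fin n → Fin n → Fin n → M) :
    ∑ i, ∑ j, ∑ k, ∑ l, ∑ a, ∑ b, f a i k b j l
      = ∑ i, ∑ j, ∑ k, ∑ l, ∑ a, ∑ b, f i j k l a b := by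
  rw [← nest6SC, ← nest6SC f]
  exact Fintype.sum_equiv
    ⟨fun p => (p.2.2.2.2.1, p.1, p.2.2.1, p.2.2.2.2.2, p.2.1, p.2.2.2.1),
     fun q => (q.2.1, q.2.2.2.2.1, q.2.2.1, q.2.2.2.2.2, q.1, q.2.2.2.1),
      fun p => rfl, fun p => rfl⟩ _ _ (fun p => rfl)

private lemma permB2SC (f : Fin n → Fin n → Fin n → Fin n → Fin n → Fin n → M) :
    ∑ i, ∑ j, ∑ k, ∑ l, ∑ a, ∑ b, f a j k b i l
      = ∑ i, ∑ j, ∑ k, ∑ l, ∑ a, ∑ b, f i j k l a b := by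
  rw [← nest6SC, ← nest6SC f]
  exact Fintype.sum_equiv
    ⟨fun p => (p.2.2.2.2.1, p.2.1, p.2.2.1, p.2.2.2.2.2, p.1, p.2.2.2.1),
     fun q => (q.2.2.2.2.1, q.2.1, q.2.2.1, q.2.2.2.2.2, q.1, q.2.2.2.1),
      fun p => rfl, fun p => rfl⟩ _ _ (fun p => rfl)

private lemma sum6_congrSC (f g : Fin n → Fin n → Fin n → Fin n → Fin n → Fin n → M)
    (h : ∀ i j k l a b, f i j k l a b = g i j k l a b) :
    ∑ i, ∑ j, ∑ k, ∑ l, ∑ a, ∑ b, f i j k l a b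
      = ∑ i, ∑ j, ∑ k, ∑ l, ∑ a, ∑ b, g i j k l a b := by
  exact Finset.sum_congr rfl fun i _ => Finset.sum_congr rfl fun j _ =>
    Finset.sum_congr rfl fun k _ => Finset.sum_congr rfl fun l _ =>
      Finset.sum_congr rfl fun a _ => Finset.sum_congr rfl fun b _ => h i j k l a b

private lemma sum4_congrSC (f g : Fin n → Fin n → Fin n → Fin n → M)
    (h : ∀ i j k l, f i j k l = g i j k l) :
    ∑ i, ∑ j, ∑ k, ∑ l, f i j k l = ∑ i, ∑ j, ∑ k, ∑ l, g i j k l := by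
  exact Finset.sum_congr rfl fun i _ => Finset.sum_congr rfl fun j _ =>
    Finset.sum_congr rfl fun k _ => Finset.sum_congr rfl fun l _ => h i j k l

/-- contraction lemma for the primal curvature -/
private lemma lemASC (Rb : Fin n → Fin n → Fin n → Fin n → ℝ)
    (J : Matrix (Fin n) (Fin n) ℝ) (x y u v : Fin n → ℝ)
    (hu : ∀ i, u i = ∑ a, J i a * x a) (hv : ∀ i, v i = ∑ a, J i a * y a) :
    ∑ i, ∑ j, ∑ k, ∑ l,
      (∑ a, ∑ b, (-2 * Rb i a b k * J a j * J b l + 2 * Rb j a b k * J a i * J b l))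
        * x i * y j * y k * x l
    = ∑ i, ∑ j, ∑ k, ∑ l,
      (-2 * Rb i j k l * x i * v j * u k * y l
        + 2 * Rb i j k l * y i * u j * u k * y l) := by
  have hL : ∑ i, ∑ j, ∑ k, ∑ l,
      (∑ a, ∑ b, (-2 * Rb i a b k * J a j * J b l + 2 * Rb j a b k * J a i * J b l))
        * x i * y j * y k * x l
    = (∑ i, ∑ j, ∑ k, ∑ l, ∑ a, ∑ b,
        -2 * Rb i a b k * J a j * J b l * x i * y j * y k * x l)
      + ∑ i, ∑ j, ∑ k, ∑ l, ∑ a, ∑ b,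
        2 * Rb j a b k * J a i * J b l * x i * y j * y k * x l := by
    simp only [Finset.sum_mul, add_mul, Finset.sum_add_distrib]
  have hR : ∑ i, ∑ j, ∑ k, ∑ l,
      (-2 * Rb i j k l * x i * v j * u k * y l
        + 2 * Rb i j k l * y i * u j * u k * y l)
    = (∑ i, ∑ j, ∑ k, ∑ l, ∑ a, ∑ b,
        -2 * Rb i j k l * x i * (J j a * y a) * (J k b * x b) * y l)
      + ∑ i, ∑ j, ∑ k, ∑ l, ∑ a, ∑ b,
        2 * Rb i j k l * y i * (J j a * x a) * (J k b * x b) * y l := by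
    simp only [hu, hv, Finset.mul_sum, Finset.sum_mul, Finset.sum_add_distrib]
    refine congrArg₂ (· + ·) ?_ ?_ <;>
      exact Finset.sum_congr rfl fun i _ => Finset.sum_congr rfl fun j _ =>
        Finset.sum_congr rfl fun k _ => Finset.sum_congr rfl fun l _ => Finset.sum_comm
  rw [hL, hR]
  refine congrArg₂ (· + ·) ?_ ?_
  · calc ∑ i, ∑ j, ∑ k, ∑ l, ∑ a, ∑ b,
          -2 * Rb i a b k * J a j * J b l * x i * y j * y k * x l
        = ∑ i, ∑ j, ∑ k, ∑ l, ∑ a, ∑ b,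
            (fun i j k l a b => -2 * Rb i j k l * x i * (J j a * y a) * (J k b * x b) * y l)
              i a b k j l := by
          exact sum6_congrSC _ _ (fun i j k l a b => by ring)
      _ = _ := permA1SC _
  · calc ∑ i, ∑ j, ∑ k, ∑ l, ∑ a, ∑ b,
          2 * Rb j a b k * J a i * J b l * x i * y j * y k * x l
        = ∑ i, ∑ j, ∑ k, ∑ l, ∑ a, ∑ b,
            (fun i j k l a b => 2 * Rb i j k l * y i * (J j a * x a) * (J k b * x b) * y l)
              j a b k i l := by
          exact sum6_congrSC _ _ (fun i j k l a b => by ring)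
      _ = _ := permA2SC _

/-- contraction lemma for the dual curvature -/
private lemma lemBSC (Rb : Fin n → Fin n → Fin n → Fin n → ℝ)
    (Jinv : Matrix (Fin n) (Fin n) ℝ) (x y u v : Fin n → ℝ)
    (hx : ∀ i, x i = ∑ a, Jinv i a * u a) (hy : ∀ i, y i = ∑ a, Jinv i a * v a) :
    ∑ i, ∑ j, ∑ k, ∑ l,
      (∑ a, ∑ b, (-2 * Rb a i k b * Jinv a j * Jinv b l
          + 2 * Rb a j k b * Jinv a i * Jinv b l))
        * u i * v j * v k * u l
    = ∑ i, ∑ j, ∑ k, ∑ l,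
      (-2 * Rb i j k l * y i * u j * v k * x l
        + 2 * Rb i j k l * x i * v j * v k * x l) := by
  have hL : ∑ i, ∑ j, ∑ k, ∑ l,
      (∑ a, ∑ b, (-2 * Rb a i k b * Jinv a j * Jinv b l
          + 2 * Rb a j k b * Jinv a i * Jinv b l))
        * u i * v j * v k * u l
    = (∑ i, ∑ j, ∑ k, ∑ l, ∑ a, ∑ b,
        -2 * Rb a i k b * Jinv a j * Jinv b l * u i * v j * v k * u l)
      + ∑ i, ∑ j, ∑ k, ∑ l, ∑ a, ∑ b,
        2 * Rb a j k b * Jinv a i * Jinv b l * u i * v j * v k * u l := by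
    simp only [Finset.sum_mul, add_mul, Finset.sum_add_distrib]
  have hR : ∑ i, ∑ j, ∑ k, ∑ l,
      (-2 * Rb i j k l * y i * u j * v k * x l
        + 2 * Rb i j k l * x i * v j * v k * x l)
    = (∑ i, ∑ j, ∑ k, ∑ l, ∑ a, ∑ b,
        -2 * Rb i j k l * (Jinv i a * v a) * u j * v k * (Jinv l b * u b))
      + ∑ i, ∑ j, ∑ k, ∑ l, ∑ a, ∑ b,
        2 * Rb i j k l * (Jinv i a * u a) * v j * v k * (Jinv l b * u b) := by
    simp only [hx, hy, Finset.mul_sum, Finset.sum_mul, Finset.sum_add_distrib]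
    refine congrArg₂ (· + ·) ?_ ?_ <;>
      exact Finset.sum_congr rfl fun i _ => Finset.sum_congr rfl fun j _ =>
        Finset.sum_congr rfl fun k _ => Finset.sum_congr rfl fun l _ => Finset.sum_comm
  rw [hL, hR]
  refine congrArg₂ (· + ·) ?_ ?_
  · calc ∑ i, ∑ j, ∑ k, ∑ l, ∑ a, ∑ b,
          -2 * Rb a i k b * Jinv a j * Jinv b l * u i * v j * v k * u l
        = ∑ i, ∑ j, ∑ k, ∑ l, ∑ a, ∑ b,
            (fun i j k l a b => -2 * Rb i j k l * (Jinv i a * v a) * u j * v k * (Jinv l b * u b))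
              a i k b j l := by
          exact sum6_congrSC _ _ (fun i j k l a b => by ring)
      _ = _ := permB1SC _
  · calc ∑ i, ∑ j, ∑ k, ∑ l, ∑ a, ∑ b,
          2 * Rb a j k b * Jinv a i * Jinv b l * u i * v j * v k * u l
        = ∑ i, ∑ j, ∑ k, ∑ l, ∑ a, ∑ b,
            (fun i j k l a b => 2 * Rb i j k l * (Jinv i a * u a) * v j * v k * (Jinv l b * u b))
              a j k b i l := by
          exact sum6_congrSC _ _ (fun i j k l a b => by ring)
      _ = _ := permB2SC _

/-- pure index-shuffling lemma assembling the average -/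
private lemma lemCSC (Rb : Fin n → Fin n → Fin n → Fin n → ℝ) (x y u v : Fin n → ℝ) :
    ∑ i, ∑ j, ∑ k, ∑ l,
      (Rb i j k l * (x i * v j * v k * x l)
        + Rb k l i j * (u i * y j * y k * u l)
        - Rb j i k l * (u i * y j * v k * x l)
        - Rb i j l k * (x i * v j * y k * u l))
    = 1 / 2 *
      ((∑ i, ∑ j, ∑ k, ∑ l,
        (-2 * Rb i j k l * x i * v j * u k * y l
          + 2 * Rb i j k l * y i * u j * u k * y l))
       + ∑ i, ∑ j, ∑ k, ∑ l,
        (-2 * Rb i j k l * y i * u j * v k * x l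
          + 2 * Rb i j k l * x i * v j * v k * x l)) := by
  have hsplitL : ∑ i, ∑ j, ∑ k, ∑ l,
      (Rb i j k l * (x i * v j * v k * x l)
        + Rb k l i j * (u i * y j * y k * u l)
        - Rb j i k l * (u i * y j * v k * x l)
        - Rb i j l k * (x i * v j * y k * u l))
    = (∑ i, ∑ j, ∑ k, ∑ l, Rb i j k l * (x i * v j * v k * x l))
      + (∑ i, ∑ j, ∑ k, ∑ l, Rb k l i j * (u i * y j * y k * u l))
      - (∑ i, ∑ j, ∑ k, ∑ l, Rb j i k l * (u i * y j * v k * x l))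
      - (∑ i, ∑ j, ∑ k, ∑ l, Rb i j l k * (x i * v j * y k * u l)) := by
    simp only [Finset.sum_add_distrib, Finset.sum_sub_distrib]
  have hsplitR1 : ∑ i, ∑ j, ∑ k, ∑ l,
      (-2 * Rb i j k l * x i * v j * u k * y l
        + 2 * Rb i j k l * y i * u j * u k * y l)
    = (∑ i, ∑ j, ∑ k, ∑ l, -2 * Rb i j k l * x i * v j * u k * y l)
      + ∑ i, ∑ j, ∑ k, ∑ l, 2 * Rb i j k l * y i * u j * u k * y l := by
    simp only [Finset.sum_add_distrib]
  have hsplitR2 : ∑ i, ∑ j, ∑ k, ∑ l,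
      (-2 * Rb i j k l * y i * u j * v k * x l
        + 2 * Rb i j k l * x i * v j * v k * x l)
    = (∑ i, ∑ j, ∑ k, ∑ l, -2 * Rb i j k l * y i * u j * v k * x l)
      + ∑ i, ∑ j, ∑ k, ∑ l, 2 * Rb i j k l * x i * v j * v k * x l := by
    simp only [Finset.sum_add_distrib]
  have e2 : ∑ i, ∑ j, ∑ k, ∑ l, Rb k l i j * (u i * y j * y k * u l)
      = ∑ i, ∑ j, ∑ k, ∑ l, Rb i j k l * (u k * y l * y i * u j) :=
    perm4_pairSC (fun i j k l => Rb i j k l * (u k * y l * y i * u j))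
  have e3 : ∑ i, ∑ j, ∑ k, ∑ l, Rb j i k l * (u i * y j * v k * x l)
      = ∑ i, ∑ j, ∑ k, ∑ l, Rb i j k l * (u j * y i * v k * x l) :=
    perm4_swap12SC (fun i j k l => Rb i j k l * (u j * y i * v k * x l))
  have e4 : ∑ i, ∑ j, ∑ k, ∑ l, Rb i j l k * (x i * v j * y k * u l)
      = ∑ i, ∑ j, ∑ k, ∑ l, Rb i j k l * (x i * v j * y l * u k) :=
    perm4_swap34SC (fun i j k l => Rb i j k l * (x i * v j * y l * u k))
  have f1 : ∑ i, ∑ j, ∑ k, ∑ l, -2 * Rb i j k l * x i * v j * u k * y l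
      = -2 * ∑ i, ∑ j, ∑ k, ∑ l, Rb i j k l * (x i * v j * y l * u k) := by
    calc ∑ i, ∑ j, ∑ k, ∑ l, -2 * Rb i j k l * x i * v j * u k * y l
        = ∑ i, ∑ j, ∑ k, ∑ l, (-2 : ℝ) * (Rb i j k l * (x i * v j * y l * u k)) :=
          sum4_congrSC _ _ (fun i j k l => by ring)
      _ = _ := by simp only [← Finset.mul_sum]
  have f2 : ∑ i, ∑ j, ∑ k, ∑ l, 2 * Rb i j k l * y i * u j * u k * y l
      = 2 * ∑ i, ∑ j, ∑ k, ∑ l, Rb i j k l * (u k * y l * y i * u j) := by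
    calc ∑ i, ∑ j, ∑ k, ∑ l, 2 * Rb i j k l * y i * u j * u k * y l
        = ∑ i, ∑ j, ∑ k, ∑ l, (2 : ℝ) * (Rb i j k l * (u k * y l * y i * u j)) :=
          sum4_congrSC _ _ (fun i j k l => by ring)
      _ = _ := by simp only [← Finset.mul_sum]
  have f3 : ∑ i, ∑ j, ∑ k, ∑ l, -2 * Rb i j k l * y i * u j * v k * x l
      = -2 * ∑ i, ∑ j, ∑ k, ∑ l, Rb i j k l * (u j * y i * v k * x l) := by
    calc ∑ i, ∑ j, ∑ k, ∑ l, -2 * Rb i j k l * y i * u j * v k * x l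
        = ∑ i, ∑ j, ∑ k, ∑ l, (-2 : ℝ) * (Rb i j k l * (u j * y i * v k * x l)) :=
          sum4_congrSC _ _ (fun i j k l => by ring)
      _ = _ := by simp only [← Finset.mul_sum]
  have f4 : ∑ i, ∑ j, ∑ k, ∑ l, 2 * Rb i j k l * x i * v j * v k * x l
      = 2 * ∑ i, ∑ j, ∑ k, ∑ l, Rb i j k l * (x i * v j * v k * x l) := by
    calc ∑ i, ∑ j, ∑ k, ∑ l, 2 * Rb i j k l * x i * v j * v k * x l
        = ∑ i, ∑ j, ∑ k, ∑ l, (2 : ℝ) * (Rb i j k l * (x i * v j * v k * x l)) :=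
          sum4_congrSC _ _ (fun i j k l => by ring)
      _ = _ := by simp only [← Finset.mul_sum]
  rw [hsplitL, e2, e3, e4, hsplitR1, hsplitR2, f1, f2, f3, f4]
  ring

end AuxSC

/-- on the graph of optimal transport the unnormalized sectional
curvature of the Kim–McCann metric is the average of the primal and dual
unnormalized sectional curvatures:
`sec̄_u(X,Y) = (1/2)(sec_u(X,Y) + sec*_u(X,Y))` for `X, Y` tangent to `G`.

Tangent vectors to `G` are written in primal components `x`, with barred (dual)
components `x̄ = J x` where `J = ∂η/∂ξ` is the Jacobian of the transport map.
`Rb i j k l` denotes the curvature coefficient `R̄_{i j̄ k̄ ℓ}` of `h` at the base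
point, which together with the symmetries of the curvature tensor determines all
(possibly) nonzero coefficients. -/
theorem average_of_sectional_curvatures {n : ℕ}
    (Rb : Fin n → Fin n → Fin n → Fin n → ℝ)
    (hsymm : ∀ i j k l, Rb i j k l = Rb l k j i)
    (J Jinv : Matrix (Fin n) (Fin n) ℝ)
    (hJ : J * Jinv = 1) (hJ' : Jinv * J = 1)
    (secbar sec secstar : (Fin n → ℝ) → (Fin n → ℝ) → ℝ)
    -- sec̄_u(X,Y) = h(R̄(X,Y)Y, X) expanded in coordinates
    (hsecbar : ∀ x y, secbar x y = ∑ i, ∑ j, ∑ k, ∑ l,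
      (Rb i j k l * (x i * (J *ᵥ y) j * (J *ᵥ y) k * x l)
        + Rb k l i j * ((J *ᵥ x) i * y j * y k * (J *ᵥ x) l)
        - Rb j i k l * ((J *ᵥ x) i * y j * (J *ᵥ y) k * x l)
        - Rb i j l k * (x i * (J *ᵥ y) j * y k * (J *ᵥ x) l)))
    -- sec_u(X,Y) = R_{ijkl} xⁱ yʲ yᵏ xˡ in primal coordinates
    (hsec : ∀ x y, sec x y = ∑ i, ∑ j, ∑ k, ∑ l,
      (∑ a, ∑ b, (-2 * Rb i a b k * J a j * J b l + 2 * Rb j a b k * J a i * J b l))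
        * x i * y j * y k * x l)
    -- sec*_u(X,Y) = R*_{īj̄k̄ℓ̄} x̄ⁱ ȳʲ ȳᵏ x̄ˡ in dual coordinates
    (hsecstar : ∀ x y, secstar x y = ∑ i, ∑ j, ∑ k, ∑ l,
      (∑ a, ∑ b, (-2 * Rb a i k b * Jinv a j * Jinv b l
          + 2 * Rb a j k b * Jinv a i * Jinv b l))
        * (J *ᵥ x) i * (J *ᵥ y) j * (J *ᵥ y) k * (J *ᵥ x) l) :
    ∀ x y : Fin n → ℝ, secbar x y = (1 / 2) * (sec x y + secstar x y) := by
  intro x y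
  rw [hsecbar, hsec, hsecstar]
  have hu : ∀ i, (J *ᵥ x) i = ∑ a, J i a * x a := fun i => rfl
  have hv : ∀ i, (J *ᵥ y) i = ∑ a, J i a * y a := fun i => rfl
  have hx : ∀ i, x i = ∑ a, Jinv i a * (J *ᵥ x) a := by
    intro i
    calc x i = (Jinv *ᵥ (J *ᵥ x)) i := by rw [mulVec_mulVec, hJ', one_mulVec]
      _ = ∑ a, Jinv i a * (J *ᵥ x) a := rfl
  have hy : ∀ i, y i = ∑ a, Jinv i a * (J *ᵥ y) a := by
    intro i
    calc y i = (Jinv *ᵥ (J *ᵥ y)) i := by rw [mulVec_mulVec, hJ', one_mulVec]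
      _ = ∑ a, Jinv i a * (J *ᵥ y) a := rfl
  rw [lemASC Rb J x y (J *ᵥ x) (J *ᵥ y) hu hv,
      lemBSC Rb Jinv x y (J *ᵥ x) (J *ᵥ y) hx hy]
  exact lemCSC Rb x y (J *ᵥ x) (J *ᵥ y)
end

section
/- Let c(p,q') = (1/α) log(1 + α p·q') on (0,∞)ⁿ × (0,∞)ⁿ with α > 0. Then the mixed second partials are c_{i:j̄} = δᵢʲ/(1 + α p·q') − α pʲ q'^ī/(1 + α p·q')², and the Christoffel symbols of the Kim–McCann Levi-Civita connection satisfy Γ̄_{ij}^k = −(α/(1+α p·q'))(q'^ī δⱼᵏ + q'^j̄ δᵢᵏ) and Γ̄_{īj̄}^{k̄} = −(α/(1+α p·q'))(pⁱ δⱼᵏ + pʲ δᵢᵏ). -/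
/-!
Write `L = 1 + α p·q'`. Away from `L = 0` every derivative of the logarithmic cost is a
polynomial in `p`, `q'` and `L⁻¹`, since `∂L⁻¹/∂q'ʲ = -α pʲ L⁻²` and `∂L⁻¹/∂pʲ = -α q'ʲ L⁻²`.
Differentiating `c_{i:j̄} = δᵢʲ L⁻¹ - α pʲ q'ⁱ L⁻²` once more shows that the third
derivatives are combinations of the rows (resp. columns) of `(c_{i:j̄})`:
`c_{ij:k̄} = -(α/L)(q'ⁱ c_{j:k̄} + q'ʲ c_{i:k̄})` and `c_{m:īj̄} = -(α/L)(pⁱ c_{m:j̄} + pʲ c_{m:ī})`.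
Contracting with the inverse matrix turns those rows and columns into Kronecker deltas.
-/

open Filter Topology

section Partials

variable {n : ℕ} {F : (Fin n → ℝ) → (Fin n → ℝ) → ℝ} {f : (Fin n → ℝ) → ℝ}
  {f' : (Fin n → ℝ) →L[ℝ] ℝ} {x y : Fin n → ℝ}

lemma pd1_eq_of_eventuallyEq (hF : (fun x' => F x' y) =ᶠ[𝓝 x] f) (hf : HasFDerivAt f f' x)
    (i : Fin n) : pd1 F i x y = f' (Pi.single i 1) := by
  rw [pd1, hF.fderiv_eq, hf.fderiv]

lemma pd2_eq_of_eventuallyEq (hF : F x =ᶠ[𝓝 y] f) (hf : HasFDerivAt f f' y) (j : Fin n) :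
    pd2 F j x y = f' (Pi.single j 1) := by
  rw [pd2, hF.fderiv_eq, hf.fderiv]

end Partials

section DotProduct

variable {n : ℕ}

noncomputable def dotCLM (p : Fin n → ℝ) : (Fin n → ℝ) →L[ℝ] ℝ :=
  ∑ i, p i • ContinuousLinearMap.proj i

@[simp]
lemma dotCLM_single (p : Fin n → ℝ) (i : Fin n) : dotCLM p (Pi.single i 1) = p i := by
  simp [dotCLM, Pi.single_apply]

lemma hasFDerivAt_dotProduct_right (p q : Fin n → ℝ) :
    HasFDerivAt (fun q' => ∑ i, p i * q' i) (dotCLM p) q := by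
  simpa [dotCLM] using HasFDerivAt.fun_sum fun i _ => (hasFDerivAt_apply i q).const_mul (p i)

end DotProduct

section Contraction

variable {ι R : Type*} [Fintype ι] [DecidableEq ι] {f : ι → ι → R} {B : Matrix ι ι R}
  {T : ι → R} {t a b : R} {i j : ι}

lemma sum_mul_eq_of_eq_rowComb [Semiring R] (hAB : Matrix.of f * B = 1)
    (hT : ∀ r, T r = t * (a * f i r + b * f j r)) (k : ι) :
    ∑ r, T r * B r k = t * (a * (if i = k then 1 else 0) + b * (if j = k then 1 else 0)) := by
  have hrow (i' : ι) : ∑ r, f i' r * B r k = if i' = k then 1 else 0 := by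
    simpa [Matrix.mul_apply, Matrix.one_apply] using congrFun (congrFun hAB i') k
  simp only [hT, ← hrow, Finset.mul_sum, Finset.sum_add_distrib, add_mul, mul_add, mul_assoc]

lemma sum_mul_eq_of_eq_colComb [CommSemiring R] (hBA : B * Matrix.of f = 1)
    (hT : ∀ r, T r = t * (a * f r i + b * f r j)) (k : ι) :
    ∑ r, B k r * T r = t * (a * (if i = k then 1 else 0) + b * (if j = k then 1 else 0)) := by
  have hcol (j' : ι) : ∑ r, B k r * f r j' = if j' = k then 1 else 0 := by
    simpa [Matrix.mul_apply, Matrix.one_apply, eq_comm] using congrFun (congrFun hBA k) j'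
  simp only [hT, ← hcol, Finset.mul_sum, Finset.sum_add_distrib, mul_add]
  congr 1 <;> refine Finset.sum_congr rfl fun r _ => by ring

end Contraction

section LogCost

variable {n : ℕ} {α : ℝ} {x y : Fin n → ℝ}

def logCostDenom (α : ℝ) (p q : Fin n → ℝ) : ℝ := 1 + α * ∑ i, p i * q i

noncomputable def logCost (α : ℝ) (p q : Fin n → ℝ) : ℝ :=
  (1 / α) * Real.log (logCostDenom α p q)

lemma logCostDenom_comm (α : ℝ) (p q : Fin n → ℝ) :
    logCostDenom α p q = logCostDenom α q p := by
  simp only [logCostDenom, mul_comm (p _)]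

lemma logCostDenom_pos (hα : 0 ≤ α) {p q : Fin n → ℝ} (hp : ∀ i, 0 ≤ p i) (hq : ∀ i, 0 ≤ q i) :
    0 < logCostDenom α p q := by
  have : 0 ≤ α * ∑ i, p i * q i :=
    mul_nonneg hα (Finset.sum_nonneg fun i _ => mul_nonneg (hp i) (hq i))
  unfold logCostDenom
  linarith

lemma hasFDerivAt_logCostDenom_right (α : ℝ) (x y : Fin n → ℝ) :
    HasFDerivAt (logCostDenom α x) (α • dotCLM x) y :=
  ((hasFDerivAt_dotProduct_right x y).const_mul α).const_add 1

lemma hasFDerivAt_logCostDenom_left (α : ℝ) (x y : Fin n → ℝ) :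
    HasFDerivAt (logCostDenom α · y) (α • dotCLM y) x := by
  simpa only [logCostDenom_comm α _ y] using hasFDerivAt_logCostDenom_right α y x

lemma hasFDerivAt_inv_logCostDenom_right (hL : logCostDenom α x y ≠ 0) :
    HasFDerivAt (fun y' => (logCostDenom α x y')⁻¹)
      (-(α * (logCostDenom α x y)⁻¹ ^ 2) • dotCLM x) y :=
  ((hasDerivAt_inv hL).comp_hasFDerivAt y (hasFDerivAt_logCostDenom_right α x y)).congr_fderiv
    (by ext v; simp only [smul_apply, smul_eq_mul]; ring)

lemma hasFDerivAt_inv_logCostDenom_left (hL : logCostDenom α x y ≠ 0) :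
    HasFDerivAt (fun x' => (logCostDenom α x' y)⁻¹)
      (-(α * (logCostDenom α x y)⁻¹ ^ 2) • dotCLM y) x :=
  ((hasDerivAt_inv hL).comp_hasFDerivAt x (hasFDerivAt_logCostDenom_left α x y)).congr_fderiv
    (by ext v; simp only [smul_apply, smul_eq_mul]; ring)

lemma eventually_logCostDenom_ne_zero_right (hL : logCostDenom α x y ≠ 0) :
    ∀ᶠ y' in 𝓝 y, logCostDenom α x y' ≠ 0 :=
  (hasFDerivAt_logCostDenom_right α x y).continuousAt.eventually_ne hL

lemma eventually_logCostDenom_ne_zero_left (hL : logCostDenom α x y ≠ 0) :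
    ∀ᶠ x' in 𝓝 x, logCostDenom α x' y ≠ 0 :=
  (hasFDerivAt_logCostDenom_left α x y).continuousAt.eventually_ne hL

variable (hα : α ≠ 0)
include hα

lemma pd1_logCost (hL : logCostDenom α x y ≠ 0) (i : Fin n) :
    pd1 (logCost α) i x y = y i * (logCostDenom α x y)⁻¹ := by
  rw [pd1_eq_of_eventuallyEq .rfl (((hasFDerivAt_logCostDenom_left α x y).log hL).const_mul _)]
  simp only [smul_apply, dotCLM_single, smul_eq_mul]
  field_simp

lemma pd2_pd1_logCost (hL : logCostDenom α x y ≠ 0) (i j : Fin n) :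
    pd2 (pd1 (logCost α) i) j x y
      = (if i = j then 1 else 0) / logCostDenom α x y
        - α * x j * y i / logCostDenom α x y ^ 2 := by
  have hf := (hasFDerivAt_apply i y).fun_mul (hasFDerivAt_inv_logCostDenom_right hL)
  rw [pd2_eq_of_eventuallyEq ?_ hf]
  · simp only [add_apply, smul_apply, ContinuousLinearMap.proj_apply, Pi.single_apply,
      dotCLM_single, smul_eq_mul]
    ring
  · filter_upwards [eventually_logCostDenom_ne_zero_right hL] with y' hy'
    exact pd1_logCost hα hy' i

lemma pd1_pd1_logCost (hL : logCostDenom α x y ≠ 0) (i j : Fin n) :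
    pd1 (pd1 (logCost α) i) j x y = -(α * y i * y j * (logCostDenom α x y)⁻¹ ^ 2) := by
  have hf := (hasFDerivAt_inv_logCostDenom_left hL).const_mul (y i)
  rw [pd1_eq_of_eventuallyEq ?_ hf]
  · simp only [smul_apply, dotCLM_single, smul_eq_mul]
    ring
  · filter_upwards [eventually_logCostDenom_ne_zero_left hL] with x' hx'
    exact pd1_logCost hα hx' i

lemma pd2_pd1_pd1_logCost (hL : logCostDenom α x y ≠ 0) (i j k : Fin n) :
    pd2 (pd1 (pd1 (logCost α) i) j) k x y
      = -(α / logCostDenom α x y)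
        * (y i * pd2 (pd1 (logCost α) j) k x y + y j * pd2 (pd1 (logCost α) i) k x y) := by
  have hf := ((((hasFDerivAt_apply i y).const_mul α).fun_mul (hasFDerivAt_apply j y)).fun_mul
    ((hasFDerivAt_inv_logCostDenom_right hL).pow 2)).fun_neg
  rw [pd2_eq_of_eventuallyEq ?_ hf, pd2_pd1_logCost hα hL, pd2_pd1_logCost hα hL]
  · simp only [neg_apply, add_apply, smul_apply, ContinuousLinearMap.proj_apply, Pi.single_apply,
      dotCLM_single, smul_eq_mul, nsmul_eq_mul]
    ring
  · filter_upwards [eventually_logCostDenom_ne_zero_right hL] with y' hy'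
    exact pd1_pd1_logCost hα hy' i j

lemma pd2_pd2_pd1_logCost (hL : logCostDenom α x y ≠ 0) (m i j : Fin n) :
    pd2 (pd2 (pd1 (logCost α) m) i) j x y
      = -(α / logCostDenom α x y)
        * (x i * pd2 (pd1 (logCost α) m) j x y + x j * pd2 (pd1 (logCost α) m) i x y) := by
  have hf := ((hasFDerivAt_inv_logCostDenom_right hL).const_mul (if m = i then 1 else 0)).fun_sub
    (((hasFDerivAt_apply m y).const_mul (α * x i)).fun_mul
      ((hasFDerivAt_inv_logCostDenom_right hL).pow 2))
  rw [pd2_eq_of_eventuallyEq ?_ hf, pd2_pd1_logCost hα hL, pd2_pd1_logCost hα hL]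
  · simp only [sub_apply, add_apply, smul_apply, ContinuousLinearMap.proj_apply, Pi.single_apply,
      dotCLM_single, smul_eq_mul, nsmul_eq_mul]
    ring
  · filter_upwards [eventually_logCostDenom_ne_zero_right hL] with y' hy'
    rw [pd2_pd1_logCost hα hy']
    ring

end LogCost

/-- for the logarithmic cost `c(p,q') = (1/α) log(1 + α p·q')` on the
positive orthant: the mixed second partials `c_{i:j̄}` and the Kim–McCann
Christoffel symbols `Γ̄_{ij}^k = c_{ij:m̄}c^{m̄:k}` and `Γ̄_{īj̄}^{k̄} = c^{k̄:m}c_{m:īj̄}`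
have the stated explicit forms. -/
theorem log_cost_christoffel {n : ℕ} (α : ℝ) (hα : 0 < α)
    (c : (Fin n → ℝ) → (Fin n → ℝ) → ℝ)
    (hc : ∀ p q', c p q' = (1 / α) * Real.log (1 + α * ∑ i, p i * q' i))
    (cinv : (Fin n → ℝ) → (Fin n → ℝ) → Matrix (Fin n) (Fin n) ℝ)
    (hcinv : ∀ p q', (∀ i, 0 < p i) → (∀ i, 0 < q' i) →
      (Matrix.of fun i j => pd2 (pd1 c i) j p q') * cinv p q' = 1 ∧
      cinv p q' * (Matrix.of fun i j => pd2 (pd1 c i) j p q') = 1) :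
    ∀ p q' : Fin n → ℝ, (∀ i, 0 < p i) → (∀ i, 0 < q' i) →
      (∀ i j : Fin n, pd2 (pd1 c i) j p q'
          = (if i = j then 1 else 0) / (1 + α * ∑ m, p m * q' m)
            - α * p j * q' i / (1 + α * ∑ m, p m * q' m) ^ 2) ∧
      (∀ i j k : Fin n,
        (∑ m, pd2 (pd1 (pd1 c i) j) m p q' * cinv p q' m k)
          = -(α / (1 + α * ∑ m, p m * q' m))
            * (q' i * (if j = k then 1 else 0) + q' j * (if i = k then 1 else 0))) ∧
      (∀ i j k : Fin n,
        (∑ m, cinv p q' k m * pd2 (pd2 (pd1 c m) i) j p q')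
          = -(α / (1 + α * ∑ m, p m * q' m))
            * (p i * (if j = k then 1 else 0) + p j * (if i = k then 1 else 0))) := by
  intro p q' hp hq
  obtain rfl : c = logCost α := funext fun p => funext (hc p)
  have hα' : α ≠ 0 := hα.ne'
  have hL : logCostDenom α p q' ≠ 0 :=
    (logCostDenom_pos hα.le (fun i => (hp i).le) fun i => (hq i).le).ne'
  obtain ⟨hAB, hBA⟩ := hcinv p q' hp hq
  refine ⟨fun i j => ?_, fun i j k => ?_, fun i j k => ?_⟩
  · exact pd2_pd1_logCost hα' hL i j
  · exact sum_mul_eq_of_eq_rowComb hAB (pd2_pd1_pd1_logCost hα' hL i j) k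
  · exact sum_mul_eq_of_eq_colComb hBA (fun m => pd2_pd2_pd1_logCost hα' hL m i j) k
end

section
/- A smooth nondegenerate cost c on U × V ⊂ ℝⁿ × ℝⁿ has constant cross curvature −4α on TM ∧ TM' (i.e., sec̄_u(X,Y) = −4α·(h(X,X)h(Y,Y) − h(X,Y)²) = 4α h(X,Y)² for all X = v ⊕ 0 and Y = 0 ⊕ v̄) if and only if R̄_{ij̄k̄ℓ} = (α/2)(c_{i:j̄}c_{ℓ:k̄} + c_{i:k̄}c_{ℓ:j̄}) holds in coordinates. In particular, the logarithmic cost (1/α)log(1+αp·q') has constant cross curvature −4α. -/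
set_option maxHeartbeats 1600000

section helpers
variable {n : ℕ}


noncomputable def Ldot {n : ℕ} (a : Fin n → ℝ) : (Fin n → ℝ) →L[ℝ] ℝ :=
  ∑ j, a j • (ContinuousLinearMap.proj j : (Fin n → ℝ) →L[ℝ] ℝ)

variable {n : ℕ}

lemma Ldot_apply (a : Fin n → ℝ) (v : Fin n → ℝ) : Ldot a v = ∑ j, a j * v j := by
  simp [Ldot]

lemma Ldot_single (a : Fin n → ℝ) (k : Fin n) : Ldot a (Pi.single k 1) = a k := by
  simp [Ldot_apply, Pi.single_apply, Finset.sum_ite_eq', Finset.mem_univ]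

lemma hasFDerivAt_dotr (a : Fin n → ℝ) (y : Fin n → ℝ) :
    HasFDerivAt (fun y' : Fin n → ℝ => ∑ j, a j * y' j) (Ldot a) y := by
  apply HasFDerivAt.fun_sum
  intro j _
  exact ((ContinuousLinearMap.proj j : (Fin n → ℝ) →L[ℝ] ℝ).hasFDerivAt).const_mul (a j)

lemma hasFDerivAt_dotl (a : Fin n → ℝ) (x : Fin n → ℝ) :
    HasFDerivAt (fun x' : Fin n → ℝ => ∑ j, x' j * a j) (Ldot a) x := by
  have : (fun x' : Fin n → ℝ => ∑ j, x' j * a j) = fun x' => ∑ j, a j * x' j := by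
    funext x'; exact Finset.sum_congr rfl fun j _ => mul_comm _ _
  rw [this]; exact hasFDerivAt_dotr a x

lemma hasFDerivAt_tr (al : ℝ) (p y : Fin n → ℝ) :
    HasFDerivAt (fun y' : Fin n → ℝ => 1 + al * ∑ j, p j * y' j) (al • Ldot p) y :=
  ((hasFDerivAt_dotr p y).const_mul al).const_add 1

lemma hasFDerivAt_tl (al : ℝ) (q x : Fin n → ℝ) :
    HasFDerivAt (fun x' : Fin n → ℝ => 1 + al * ∑ j, x' j * q j) (al • Ldot q) x :=
  ((hasFDerivAt_dotl q x).const_mul al).const_add 1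

lemma continuous_tl (al : ℝ) (q : Fin n → ℝ) :
    Continuous (fun x : Fin n → ℝ => 1 + al * ∑ j, x j * q j) :=
  continuous_const.add (continuous_const.mul
    (continuous_finset_sum _ fun j _ => (continuous_apply j).mul continuous_const))

lemma continuous_tr (al : ℝ) (p : Fin n → ℝ) :
    Continuous (fun y : Fin n → ℝ => 1 + al * ∑ j, p j * y j) :=
  continuous_const.add (continuous_const.mul
    (continuous_finset_sum _ fun j _ => continuous_const.mul (continuous_apply j)))

lemma hasFDerivAt_coord (i : Fin n) (y : Fin n → ℝ) :
    HasFDerivAt (fun y' : Fin n → ℝ => y' i)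
      (ContinuousLinearMap.proj i : (Fin n → ℝ) →L[ℝ] ℝ) y :=
  (ContinuousLinearMap.proj i : (Fin n → ℝ) →L[ℝ] ℝ).hasFDerivAt


lemma myInv {d : (Fin n → ℝ) → ℝ} {d' : (Fin n → ℝ) →L[ℝ] ℝ} {x : Fin n → ℝ}
    (hd : HasFDerivAt d d' x) (hx : d x ≠ 0) :
    HasFDerivAt (fun y => (d y)⁻¹) ((-(d x ^ 2)⁻¹) • d') x :=
  (hasDerivAt_inv hx).comp_hasFDerivAt x hd

lemma myDiv {c d : (Fin n → ℝ) → ℝ} {c' d' : (Fin n → ℝ) →L[ℝ] ℝ} {x : Fin n → ℝ}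
    (hc : HasFDerivAt c c' x) (hd : HasFDerivAt d d' x) (hx : d x ≠ 0) :
    HasFDerivAt (fun y => c y / d y)
      (c x • ((-(d x ^ 2)⁻¹) • d') + (d x)⁻¹ • c') x := by
  simp only [div_eq_mul_inv]
  exact hc.mul (myInv hd hx)

lemma myPow {d : (Fin n → ℝ) → ℝ} {d' : (Fin n → ℝ) →L[ℝ] ℝ} {x : Fin n → ℝ}
    (hd : HasFDerivAt d d' x) (m : ℕ) :
    HasFDerivAt (fun y => (d y) ^ m) (((m : ℝ) * d x ^ (m - 1)) • d') x :=
  (hasDerivAt_pow m (d x)).comp_hasFDerivAt x hd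

section logcost
variable (al : ℝ) (hal : al ≠ 0) (cl : (Fin n → ℝ) → (Fin n → ℝ) → ℝ)
  (hcl : ∀ p q, cl p q = (1 / al) * Real.log (1 + al * ∑ i, p i * q i))

include hal hcl

lemma logD1 (i : Fin n) (p q : Fin n → ℝ) (ht : 1 + al * ∑ j, p j * q j ≠ 0) :
    pd1 cl i p q = q i / (1 + al * ∑ j, p j * q j) := by
  have hfun : (fun x => cl x q) = fun x => (1 / al) * Real.log (1 + al * ∑ j, x j * q j) := by
    funext x; rw [hcl x q]
  have h := ((hasFDerivAt_tl al q p).log ht).const_mul (1 / al)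
  show fderiv ℝ (fun x' => cl x' q) p (Pi.single i 1) = _
  rw [hfun, h.fderiv]
  simp [Ldot_single]
  field_simp

lemma logD2 (i l : Fin n) (p q : Fin n → ℝ) (ht : 1 + al * ∑ j, p j * q j ≠ 0) :
    pd1 (pd1 cl i) l p q = -(al * (q i * q l)) / (1 + al * ∑ j, p j * q j) ^ 2 := by
  have hopen : IsOpen {x : Fin n → ℝ | 1 + al * ∑ j, x j * q j ≠ 0} :=
    IsOpen.preimage (continuous_tl al q) isOpen_ne
  have hev : (fun x => pd1 cl i x q) =ᶠ[nhds p] fun x => q i / (1 + al * ∑ j, x j * q j) := by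
    filter_upwards [hopen.mem_nhds ht] with x hx
    exact logD1 al hal cl hcl i x q hx
  have hg := myDiv (hasFDerivAt_const (q i) p) (hasFDerivAt_tl al q p) ht
  have h2 := hg.congr_of_eventuallyEq hev
  show fderiv ℝ (fun x' => pd1 cl i x' q) p (Pi.single l 1) = _
  rw [h2.fderiv]
  simp [Ldot_single]
  field_simp

lemma logD3 (i j : Fin n) (p q : Fin n → ℝ) (ht : 1 + al * ∑ j, p j * q j ≠ 0) :
    pd2 (pd1 cl i) j p q = (if i = j then (1:ℝ) else 0) / (1 + al * ∑ j, p j * q j)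
      - al * q i * p j / (1 + al * ∑ j, p j * q j) ^ 2 := by
  have hopen : IsOpen {y : Fin n → ℝ | 1 + al * ∑ j, p j * y j ≠ 0} :=
    IsOpen.preimage (continuous_tr al p) isOpen_ne
  have hev : (fun y => pd1 cl i p y) =ᶠ[nhds q] fun y => y i / (1 + al * ∑ j, p j * y j) := by
    filter_upwards [hopen.mem_nhds ht] with y hy
    exact logD1 al hal cl hcl i p y hy
  have hg := myDiv (hasFDerivAt_coord i q) (hasFDerivAt_tr al p q) ht
  have h2 := hg.congr_of_eventuallyEq hev
  show fderiv ℝ (fun y' => pd1 cl i p y') q (Pi.single j 1) = _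
  rw [h2.fderiv]
  simp only [ContinuousLinearMap.add_apply, ContinuousLinearMap.sub_apply,
    ContinuousLinearMap.smul_apply, ContinuousLinearMap.neg_apply,
    ContinuousLinearMap.zero_apply, smul_eq_mul, Ldot_single,
    ContinuousLinearMap.proj_apply, Pi.single_apply, Nat.cast_ofNat, pow_one,
    mul_zero, zero_mul, add_zero, zero_add, mul_one, one_mul]
  generalize (if i = j then (1:ℝ) else 0) = d1
  field_simp
  ring

lemma logD4 (i l b : Fin n) (p q : Fin n → ℝ) (ht : 1 + al * ∑ j, p j * q j ≠ 0) :
    pd2 (pd1 (pd1 cl i) l) b p q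
      = -(al * ((if i = b then (1:ℝ) else 0) * q l + (if l = b then (1:ℝ) else 0) * q i))
          / (1 + al * ∑ j, p j * q j) ^ 2
        + 2 * al ^ 2 * ((q i * q l) * p b) / (1 + al * ∑ j, p j * q j) ^ 3 := by
  have hopen : IsOpen {y : Fin n → ℝ | 1 + al * ∑ j, p j * y j ≠ 0} :=
    IsOpen.preimage (continuous_tr al p) isOpen_ne
  have hev : (fun y => pd1 (pd1 cl i) l p y) =ᶠ[nhds q]
      fun y => -(al * (y i * y l)) / (1 + al * ∑ j, p j * y j) ^ 2 := by
    filter_upwards [hopen.mem_nhds ht] with y hy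
    exact logD2 al hal cl hcl i l p y hy
  have hnum := (((hasFDerivAt_coord i q).mul (hasFDerivAt_coord l q)).const_mul al).neg
  have hden := myPow (hasFDerivAt_tr al p q) 2
  have hg := myDiv hnum hden (pow_ne_zero 2 ht)
  have h2 := hg.congr_of_eventuallyEq hev
  show fderiv ℝ (fun y' => pd1 (pd1 cl i) l p y') q (Pi.single b 1) = _
  rw [h2.fderiv]
  simp only [ContinuousLinearMap.add_apply, ContinuousLinearMap.sub_apply,
    ContinuousLinearMap.smul_apply, ContinuousLinearMap.neg_apply,
    ContinuousLinearMap.zero_apply, smul_eq_mul, Ldot_single,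
    ContinuousLinearMap.proj_apply, Pi.single_apply, Nat.cast_ofNat, pow_one,
    mul_zero, zero_mul, add_zero, zero_add, mul_one, one_mul, Pi.neg_apply, Pi.mul_apply]
  generalize (if i = b then (1:ℝ) else 0) = d1
  generalize (if l = b then (1:ℝ) else 0) = d2
  field_simp
  ring

lemma logD5 (a j k : Fin n) (p q : Fin n → ℝ) (ht : 1 + al * ∑ j, p j * q j ≠ 0) :
    pd2 (pd2 (pd1 cl a) j) k p q
      = -(al * ((if a = j then (1:ℝ) else 0) * p k + (if a = k then (1:ℝ) else 0) * p j))
          / (1 + al * ∑ j, p j * q j) ^ 2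
        + 2 * al ^ 2 * (q a * (p j * p k)) / (1 + al * ∑ j, p j * q j) ^ 3 := by
  have hopen : IsOpen {y : Fin n → ℝ | 1 + al * ∑ j, p j * y j ≠ 0} :=
    IsOpen.preimage (continuous_tr al p) isOpen_ne
  have hev : (fun y => pd2 (pd1 cl a) j p y) =ᶠ[nhds q]
      fun y => (if a = j then (1:ℝ) else 0) / (1 + al * ∑ j, p j * y j)
        - al * y a * p j / (1 + al * ∑ j, p j * y j) ^ 2 := by
    filter_upwards [hopen.mem_nhds ht] with y hy
    exact logD3 al hal cl hcl a j p y hy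
  have h1 := myDiv (hasFDerivAt_const (if a = j then (1:ℝ) else 0) q)
    (hasFDerivAt_tr al p q) ht
  have hnum2 := ((hasFDerivAt_coord a q).const_mul al).mul_const (p j)
  have h2' := myDiv hnum2 (myPow (hasFDerivAt_tr al p q) 2) (pow_ne_zero 2 ht)
  have hg := h1.sub h2'
  have h2 := hg.congr_of_eventuallyEq hev
  show fderiv ℝ (fun y' => pd2 (pd1 cl a) j p y') q (Pi.single k 1) = _
  rw [h2.fderiv]
  simp only [ContinuousLinearMap.add_apply, ContinuousLinearMap.sub_apply,
    ContinuousLinearMap.smul_apply, ContinuousLinearMap.neg_apply,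
    ContinuousLinearMap.zero_apply, smul_eq_mul, Ldot_single,
    ContinuousLinearMap.proj_apply, Pi.single_apply, Nat.cast_ofNat, pow_one,
    mul_zero, zero_mul, add_zero, zero_add, mul_one, one_mul]
  generalize (if a = j then (1:ℝ) else 0) = d1
  generalize (if a = k then (1:ℝ) else 0) = d2
  field_simp
  ring

lemma logD6 (i l j k : Fin n) (p q : Fin n → ℝ) (ht : 1 + al * ∑ j, p j * q j ≠ 0) :
    pd2 (pd2 (pd1 (pd1 cl i) l) j) k p q
      = -(al * ((if i = j then (1:ℝ) else 0) * (if l = k then (1:ℝ) else 0)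
            + (if l = j then (1:ℝ) else 0) * (if i = k then (1:ℝ) else 0)))
          / (1 + al * ∑ j, p j * q j) ^ 2
        + 2 * al ^ 2 * (((if i = j then (1:ℝ) else 0) * q l + (if l = j then (1:ℝ) else 0) * q i) * p k)
            / (1 + al * ∑ j, p j * q j) ^ 3
        + 2 * al ^ 2 * (((if i = k then (1:ℝ) else 0) * q l + (if l = k then (1:ℝ) else 0) * q i) * p j)
            / (1 + al * ∑ j, p j * q j) ^ 3
        - 6 * al ^ 3 * ((q i * q l) * (p j * p k)) / (1 + al * ∑ j, p j * q j) ^ 4 := by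
  have hopen : IsOpen {y : Fin n → ℝ | 1 + al * ∑ j, p j * y j ≠ 0} :=
    IsOpen.preimage (continuous_tr al p) isOpen_ne
  have hev : (fun y => pd2 (pd1 (pd1 cl i) l) j p y) =ᶠ[nhds q]
      fun y => -(al * ((if i = j then (1:ℝ) else 0) * y l + (if l = j then (1:ℝ) else 0) * y i))
          / (1 + al * ∑ j, p j * y j) ^ 2
        + 2 * al ^ 2 * ((y i * y l) * p j) / (1 + al * ∑ j, p j * y j) ^ 3 := by
    filter_upwards [hopen.mem_nhds ht] with y hy
    exact logD4 al hal cl hcl i l j p y hy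
  have hnum1 := ((((hasFDerivAt_coord l q).const_mul (if i = j then (1:ℝ) else 0)).add
    ((hasFDerivAt_coord i q).const_mul (if l = j then (1:ℝ) else 0))).const_mul al).neg
  have hA := myDiv hnum1 (myPow (hasFDerivAt_tr al p q) 2) (pow_ne_zero 2 ht)
  have hnum2 := (((hasFDerivAt_coord i q).mul (hasFDerivAt_coord l q)).mul_const (p j)).const_mul
    (2 * al ^ 2)
  have hB := myDiv hnum2 (myPow (hasFDerivAt_tr al p q) 3) (pow_ne_zero 3 ht)
  have hg := hA.add hB
  have h2 := hg.congr_of_eventuallyEq hev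
  show fderiv ℝ (fun y' => pd2 (pd1 (pd1 cl i) l) j p y') q (Pi.single k 1) = _
  rw [h2.fderiv]
  simp only [ContinuousLinearMap.add_apply, ContinuousLinearMap.sub_apply,
    ContinuousLinearMap.smul_apply, ContinuousLinearMap.neg_apply,
    ContinuousLinearMap.zero_apply, smul_eq_mul, Ldot_single,
    ContinuousLinearMap.proj_apply, Pi.single_apply, Nat.cast_ofNat, pow_one,
    mul_zero, zero_mul, add_zero, zero_add, mul_one, one_mul, Pi.neg_apply, Pi.mul_apply,
    Pi.add_apply]
  generalize (if i = j then (1:ℝ) else 0) = d1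
  generalize (if l = j then (1:ℝ) else 0) = d2
  generalize (if i = k then (1:ℝ) else 0) = d3
  generalize (if l = k then (1:ℝ) else 0) = d4
  field_simp
  ring

end logcost

section calc1
variable {F : (Fin n → ℝ) → (Fin n → ℝ) → ℝ} {s : Set ((Fin n → ℝ) × (Fin n → ℝ))}




lemma pd1_eq_fderiv_uncurry (hF : ContDiffOn ℝ (⊤ : ℕ∞) (fun z : (Fin n → ℝ) × (Fin n → ℝ) => F z.1 z.2) s)
    (hs : IsOpen s) {x y : Fin n → ℝ} (hz : (x, y) ∈ s) (i : Fin n) :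
    pd1 F i x y = fderiv ℝ (fun z : (Fin n → ℝ) × (Fin n → ℝ) => F z.1 z.2) (x, y) (Pi.single i 1, 0) := by
  have hd : DifferentiableAt ℝ (fun z : (Fin n → ℝ) × (Fin n → ℝ) => F z.1 z.2) (x, y) :=
    (hF.contDiffAt (hs.mem_nhds hz)).differentiableAt (by simp)
  have h1 : HasFDerivAt (fun x' => F x' y)
      ((fderiv ℝ (fun z : (Fin n → ℝ) × (Fin n → ℝ) => F z.1 z.2) (x, y)).comp
        (ContinuousLinearMap.inl ℝ _ _)) x :=
    by have := hd.hasFDerivAt.comp x (hasFDerivAt_prodMk_left (𝕜 := ℝ) x y); exact this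
  rw [pd1, h1.fderiv]
  rfl

lemma contDiffOn_pd1 (hF : ContDiffOn ℝ (⊤ : ℕ∞) (fun z : (Fin n → ℝ) × (Fin n → ℝ) => F z.1 z.2) s)
    (hs : IsOpen s) (i : Fin n) :
    ContDiffOn ℝ (⊤ : ℕ∞) (fun z : (Fin n → ℝ) × (Fin n → ℝ) => pd1 F i z.1 z.2) s := by
  apply ContDiffOn.congr
    (f := fun z : (Fin n → ℝ) × (Fin n → ℝ) =>
      fderiv ℝ (fun z : (Fin n → ℝ) × (Fin n → ℝ) => F z.1 z.2) z (Pi.single i 1, 0))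
  · exact (hF.fderiv_of_isOpen hs (by simp)).clm_apply contDiffOn_const
  · intro z hz
    obtain ⟨x, y⟩ := z
    exact pd1_eq_fderiv_uncurry hF hs hz i

lemma contDiffAt_slice1 (hF : ContDiffOn ℝ (⊤ : ℕ∞) (fun z : (Fin n → ℝ) × (Fin n → ℝ) => F z.1 z.2) s)
    (hs : IsOpen s) {x y : Fin n → ℝ} (hz : (x, y) ∈ s) :
    ContDiffAt ℝ (⊤ : ℕ∞) (fun x' => F x' y) x :=
  (hF.contDiffAt (hs.mem_nhds hz)).comp x (contDiffAt_id.prodMk contDiffAt_const)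

lemma contDiffAt_slice2 (hF : ContDiffOn ℝ (⊤ : ℕ∞) (fun z : (Fin n → ℝ) × (Fin n → ℝ) => F z.1 z.2) s)
    (hs : IsOpen s) {x y : Fin n → ℝ} (hz : (x, y) ∈ s) :
    ContDiffAt ℝ (⊤ : ℕ∞) (fun y' => F x y') y :=
  (hF.contDiffAt (hs.mem_nhds hz)).comp y (contDiffAt_const.prodMk contDiffAt_id)

lemma fderiv_fderiv_apply_symm {f : (Fin n → ℝ) → ℝ} {x : Fin n → ℝ}
    (hf : ContDiffAt ℝ (⊤ : ℕ∞) f x) (v w : Fin n → ℝ) :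
    fderiv ℝ (fun x' => fderiv ℝ f x' v) x w = fderiv ℝ (fun x' => fderiv ℝ f x' w) x v := by
  have hd : DifferentiableAt ℝ (fderiv ℝ f) x :=
    (hf.fderiv_right (m := (⊤ : ℕ∞)) (by simp)).differentiableAt (by simp)
  have e : ∀ u : Fin n → ℝ,
      fderiv ℝ (fun x' => fderiv ℝ f x' u) x = (fderiv ℝ (fderiv ℝ f) x).flip u := by
    intro u
    have := fderiv_clm_apply (c := fderiv ℝ f) (u := fun _ => u) hd (differentiableAt_const u)
    simp only [fderiv_const_apply, Pi.zero_apply] at this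
    rw [this]
    ext z
    simp
  rw [e v, e w]
  have hsym := hf.isSymmSndFDerivAt (by rw [minSmoothness_of_isRCLikeNormedField]; exact WithTop.coe_le_coe.mpr (le_top : (2 : ℕ∞) ≤ ⊤))
  simpa using hsym w v

lemma pd1_pd1_symm (hF : ContDiffOn ℝ (⊤ : ℕ∞) (fun z : (Fin n → ℝ) × (Fin n → ℝ) => F z.1 z.2) s)
    (hs : IsOpen s) {x y : Fin n → ℝ} (hz : (x, y) ∈ s) (i l : Fin n) :
    pd1 (pd1 F i) l x y = pd1 (pd1 F l) i x y := by
  have hsl := contDiffAt_slice1 hF hs hz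
  exact fderiv_fderiv_apply_symm hsl (Pi.single i 1) (Pi.single l 1)

lemma pd2_pd2_symm (hF : ContDiffOn ℝ (⊤ : ℕ∞) (fun z : (Fin n → ℝ) × (Fin n → ℝ) => F z.1 z.2) s)
    (hs : IsOpen s) {x y : Fin n → ℝ} (hz : (x, y) ∈ s) (j k : Fin n) :
    pd2 (pd2 F j) k x y = pd2 (pd2 F k) j x y := by
  have hsl := contDiffAt_slice2 hF hs hz
  exact fderiv_fderiv_apply_symm hsl (Pi.single j 1) (Pi.single k 1)

lemma pd2_congr {G : (Fin n → ℝ) → (Fin n → ℝ) → ℝ}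
    (h : ∀ z ∈ s, F z.1 z.2 = G z.1 z.2) (hs : IsOpen s) {x y : Fin n → ℝ}
    (hz : (x, y) ∈ s) (j : Fin n) : pd2 F j x y = pd2 G j x y := by
  have hev : (fun y' => F x y') =ᶠ[nhds y] fun y' => G x y' := by
    have hop : IsOpen {y' | (x, y') ∈ s} := hs.preimage (Continuous.prodMk_right x)
    filter_upwards [hop.mem_nhds hz] with y' hy'
    exact h (x, y') hy'
  rw [pd2, pd2, hev.fderiv_eq]

end calc1


lemma sum_mul_sum2 (f g : Fin n → Fin n → ℝ) :
    (∑ i, ∑ j, f i j) * (∑ i, ∑ j, g i j) = ∑ i, ∑ j, ∑ k, ∑ l, f i j * g k l := by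
  rw [Finset.sum_mul_sum]
  refine Finset.sum_congr rfl fun i _ => ?_
  simp only [Finset.sum_mul]
  rw [Finset.sum_comm]
  simp only [Finset.mul_sum]

lemma L1 (f g : Fin n → Fin n → ℝ) :
    ∑ i, ∑ j, ∑ k, ∑ l, f i j * g l k = (∑ i, ∑ j, f i j) * (∑ i, ∑ j, g i j) := by
  calc ∑ i, ∑ j, ∑ k, ∑ l, f i j * g l k
      = (∑ i, ∑ j, f i j) * (∑ k, ∑ l, g l k) := (sum_mul_sum2 f (fun k l => g l k)).symm
    _ = (∑ i, ∑ j, f i j) * (∑ i, ∑ j, g i j) := by congr 1; rw [Finset.sum_comm]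

lemma L2 (f g : Fin n → Fin n → ℝ) :
    ∑ i, ∑ j, ∑ k, ∑ l, f i k * g l j = (∑ i, ∑ j, f i j) * (∑ i, ∑ j, g i j) := by
  calc ∑ i, ∑ j, ∑ k, ∑ l, f i k * g l j
      = ∑ i, ∑ k, ∑ j, ∑ l, f i k * g l j := by
        refine Finset.sum_congr rfl fun i _ => ?_
        rw [Finset.sum_comm]
    _ = (∑ i, ∑ k, f i k) * (∑ j, ∑ l, g l j) := (sum_mul_sum2 f (fun j l => g l j)).symm
    _ = (∑ i, ∑ j, f i j) * (∑ i, ∑ j, g i j) := by congr 1; rw [Finset.sum_comm]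

lemma alg_sum (A : Fin n → Fin n → ℝ) (a : ℝ) (v w : Fin n → ℝ) :
    ∑ i, ∑ j, ∑ k, ∑ l, (a / 2) * (A i j * A l k + A i k * A l j) * v i * w j * w k * v l
      = 4 * a * (-(1 / 2) * ∑ i, ∑ j, A i j * v i * w j) ^ 2 := by
  have e : ∀ i j k l, (a / 2) * (A i j * A l k + A i k * A l j) * v i * w j * w k * v l
      = ((a / 2) * (A i j * v i * w j)) * (A l k * v l * w k)
        + ((a / 2) * (A i k * v i * w k)) * (A l j * v l * w j) := by
    intros; ring
  simp only [e, Finset.sum_add_distrib]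
  rw [L1 (fun i j => (a / 2) * (A i j * v i * w j)) (fun l k => A l k * v l * w k),
      L2 (fun i k => (a / 2) * (A i k * v i * w k)) (fun l j => A l j * v l * w j)]
  simp only [← Finset.mul_sum]
  ring

lemma bilinear_zero (g : Fin n → Fin n → ℝ) (hsym : ∀ a d, g a d = g d a)
    (h : ∀ v : Fin n → ℝ, ∑ a, ∑ d, v a * v d * g a d = 0) : ∀ a d, g a d = 0 := by
  have collapse : ∀ (a d : Fin n),
      ∑ x, ∑ y, (Pi.single a 1 + Pi.single d 1 : Fin n → ℝ) x
        * (Pi.single a 1 + Pi.single d 1 : Fin n → ℝ) y * g x y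
      = g a a + g d a + (g a d + g d d) := by
    intro a d
    simp [Pi.single_apply, add_mul, mul_add, ite_mul, mul_ite, Finset.sum_add_distrib,
      Finset.sum_ite_eq', Finset.mem_univ]
  have diag : ∀ a : Fin n, g a a = 0 := by
    intro a
    have := h (Pi.single a 1)
    simpa [Pi.single_apply, ite_mul, Finset.sum_ite_eq', Finset.mem_univ] using this
  intro a d
  have h2 := h (Pi.single a 1 + Pi.single d 1)
  rw [collapse a d] at h2
  have := hsym a d
  have da := diag a
  have dd := diag d
  linarith [hsym d a]

lemma quartic_zero (T : Fin n → Fin n → Fin n → Fin n → ℝ)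
    (h1 : ∀ i j k l, T l j k i = T i j k l) (h2 : ∀ i j k l, T i k j l = T i j k l)
    (hQ : ∀ v w : Fin n → ℝ, ∑ i, ∑ j, ∑ k, ∑ l, T i j k l * v i * w j * w k * v l = 0) :
    ∀ i j k l, T i j k l = 0 := by
  have key : ∀ (w : Fin n → ℝ) (i l : Fin n), ∑ j, ∑ k, T i j k l * w j * w k = 0 := by
    intro w
    have hb := bilinear_zero (fun a d => ∑ j, ∑ k, T a j k d * w j * w k)
      (fun a d => by
        refine Finset.sum_congr rfl fun j _ => Finset.sum_congr rfl fun k _ => ?_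
        rw [h1])
      (fun v => by
        have hq := hQ v w
        calc ∑ a, ∑ d, v a * v d * ∑ j, ∑ k, T a j k d * w j * w k
            = ∑ a, ∑ d, ∑ j, ∑ k, T a j k d * v a * w j * w k * v d := by
              refine Finset.sum_congr rfl fun a _ => Finset.sum_congr rfl fun d _ => ?_
              simp only [Finset.mul_sum]
              refine Finset.sum_congr rfl fun j _ => Finset.sum_congr rfl fun k _ => ?_
              ring
          _ = ∑ a, ∑ j, ∑ k, ∑ d, T a j k d * v a * w j * w k * v d := by
              refine Finset.sum_congr rfl fun a _ => ?_
              rw [Finset.sum_comm]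
              refine Finset.sum_congr rfl fun j _ => ?_
              exact Finset.sum_comm
          _ = 0 := hq)
    exact fun i l => hb i l
  intro i j k l
  have hb := bilinear_zero (fun j k => T i j k l)
    (fun a d => (h2 i a d l).symm)
    (fun w => by
      have := key w i l
      calc ∑ a, ∑ d, w a * w d * T i a d l
          = ∑ a, ∑ d, T i a d l * w a * w d := by
            refine Finset.sum_congr rfl fun a _ => Finset.sum_congr rfl fun d _ => ?_
            ring
        _ = 0 := this)
  exact hb j k

end helpers

lemma sum4_congr {n : ℕ} (f g : Fin n → Fin n → Fin n → Fin n → ℝ)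
    (h : ∀ i j k l, f i j k l = g i j k l) :
    ∑ i, ∑ j, ∑ k, ∑ l, f i j k l = ∑ i, ∑ j, ∑ k, ∑ l, g i j k l :=
  Finset.sum_congr rfl fun i _ => Finset.sum_congr rfl fun j _ =>
    Finset.sum_congr rfl fun k _ => Finset.sum_congr rfl fun l _ => h i j k l

lemma pull2 {n : ℕ} (c u v : ℝ) (f g : Fin n → Fin n → ℝ) :
    ∑ β, ∑ a, c * (u * f β a + v * g β a)
      = c * (u * ∑ β, ∑ a, f β a + v * ∑ β, ∑ a, g β a) := by
  simp only [Finset.mul_sum, mul_add, Finset.sum_add_distrib]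

/-- a nondegenerate cost has constant cross curvature `−4α` on
`TM ∧ TM'` (i.e. `sec̄_u(v⊕0, 0⊕v̄) = 4α h(v⊕0, 0⊕v̄)²` for all `v, v̄`) iff
`R̄_{ij̄k̄ℓ} = (α/2)(c_{i:j̄}c_{ℓ:k̄} + c_{i:k̄}c_{ℓ:j̄})` in coordinates.  In
particular the logarithmic cost `(1/α)log(1 + α p·q')` has constant cross
curvature `−4α`. -/
theorem constant_cross_curvature_iff {n : ℕ} (α : ℝ) (hα : 0 < α)
    (U V : Set (Fin n → ℝ)) (hU : IsOpen U) (hV : IsOpen V)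
    (c : (Fin n → ℝ) → (Fin n → ℝ) → ℝ)
    (hc : ContDiffOn ℝ (⊤ : ℕ∞) (fun z : (Fin n → ℝ) × (Fin n → ℝ) => c z.1 z.2) (U ×ˢ V))
    (cinv : (Fin n → ℝ) → (Fin n → ℝ) → Matrix (Fin n) (Fin n) ℝ)
    (hcinv : ∀ x ∈ U, ∀ y ∈ V,
      (Matrix.of fun i j => pd2 (pd1 c i) j x y) * cinv x y = 1 ∧
      cinv x y * (Matrix.of fun i j => pd2 (pd1 c i) j x y) = 1)
    (Rb : (Fin n → ℝ) → (Fin n → ℝ) → Fin n → Fin n → Fin n → Fin n → ℝ)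
    (hRb : ∀ x y i j k l, Rb x y i j k l
      = (1 / 2) * (-(pd2 (pd2 (pd1 (pd1 c i) l) j) k x y)
        + ∑ β, ∑ a, pd2 (pd1 (pd1 c i) l) β x y * cinv x y β a
            * pd2 (pd2 (pd1 c a) j) k x y))
    -- the logarithmic cost, with the inverse of its mixed Hessian
    (clog : (Fin n → ℝ) → (Fin n → ℝ) → ℝ)
    (hclog : ∀ p q', clog p q' = (1 / α) * Real.log (1 + α * ∑ i, p i * q' i))
    (cloginv : (Fin n → ℝ) → (Fin n → ℝ) → Matrix (Fin n) (Fin n) ℝ)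
    (hcloginv : ∀ p q', (∀ i, 0 < p i) → (∀ i, 0 < q' i) →
      (Matrix.of fun i j => pd2 (pd1 clog i) j p q') * cloginv p q' = 1 ∧
      cloginv p q' * (Matrix.of fun i j => pd2 (pd1 clog i) j p q') = 1)
    (Rblog : (Fin n → ℝ) → (Fin n → ℝ) → Fin n → Fin n → Fin n → Fin n → ℝ)
    (hRblog : ∀ p q' i j k l, Rblog p q' i j k l
      = (1 / 2) * (-(pd2 (pd2 (pd1 (pd1 clog i) l) j) k p q')
        + ∑ β, ∑ a, pd2 (pd1 (pd1 clog i) l) β p q' * cloginv p q' β a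
            * pd2 (pd2 (pd1 clog a) j) k p q')) :
    (∀ x ∈ U, ∀ y ∈ V,
      ((∀ v w : Fin n → ℝ,
          (∑ i, ∑ j, ∑ k, ∑ l, Rb x y i j k l * v i * w j * w k * v l)
            = 4 * α * (-(1 / 2) * ∑ i, ∑ j, pd2 (pd1 c i) j x y * v i * w j) ^ 2)
        ↔ (∀ i j k l : Fin n, Rb x y i j k l
            = (α / 2) * (pd2 (pd1 c i) j x y * pd2 (pd1 c l) k x y
              + pd2 (pd1 c i) k x y * pd2 (pd1 c l) j x y)))) ∧
    (∀ p q' : Fin n → ℝ, (∀ i, 0 < p i) → (∀ i, 0 < q' i) →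
      ∀ v w : Fin n → ℝ,
        (∑ i, ∑ j, ∑ k, ∑ l, Rblog p q' i j k l * v i * w j * w k * v l)
          = 4 * α * (-(1 / 2) * ∑ i, ∑ j, pd2 (pd1 clog i) j p q' * v i * w j) ^ 2) := by
  constructor
  · -- part 1
    intro x hx y hy
    have hs : IsOpen (U ×ˢ V) := hU.prod hV
    have hz : (x, y) ∈ U ×ˢ V := Set.mem_prod.2 ⟨hx, hy⟩
    constructor
    · intro hQ i j k l
      have e0 : ∀ (i l : Fin n), ∀ z ∈ U ×ˢ V,
          pd1 (pd1 c l) i z.1 z.2 = pd1 (pd1 c i) l z.1 z.2 := by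
        intro i l z hzz
        exact pd1_pd1_symm hc hs (by rw [Prod.mk.eta]; exact hzz) l i
      have hsym1 : ∀ i j k l : Fin n, Rb x y l j k i = Rb x y i j k l := by
        intro i j k l
        rw [hRb, hRb]
        have e1 : ∀ z ∈ U ×ˢ V,
            pd2 (pd1 (pd1 c l) i) j z.1 z.2 = pd2 (pd1 (pd1 c i) l) j z.1 z.2 := by
          intro z hzz
          exact pd2_congr (e0 i l) hs (by rw [Prod.mk.eta]; exact hzz) j
        have eD : pd2 (pd2 (pd1 (pd1 c l) i) j) k x y
            = pd2 (pd2 (pd1 (pd1 c i) l) j) k x y := pd2_congr e1 hs hz k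
        rw [eD]
        congr 1
        congr 1
        refine Finset.sum_congr rfl fun β _ => Finset.sum_congr rfl fun a _ => ?_
        rw [pd2_congr (e0 i l) hs hz β]
      have hsym2 : ∀ i j k l : Fin n, Rb x y i k j l = Rb x y i j k l := by
        intro i j k l
        rw [hRb, hRb]
        have hG : ContDiffOn ℝ (⊤ : ℕ∞)
            (fun z : (Fin n → ℝ) × (Fin n → ℝ) => pd1 (pd1 c i) l z.1 z.2) (U ×ˢ V) :=
          contDiffOn_pd1 (contDiffOn_pd1 hc hs i) hs l
        rw [pd2_pd2_symm hG hs hz k j]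
        congr 1
        congr 1
        refine Finset.sum_congr rfl fun β _ => Finset.sum_congr rfl fun a _ => ?_
        rw [pd2_pd2_symm (contDiffOn_pd1 hc hs a) hs hz k j]
      have hT := quartic_zero
        (fun i j k l => Rb x y i j k l - (α / 2) * (pd2 (pd1 c i) j x y * pd2 (pd1 c l) k x y
            + pd2 (pd1 c i) k x y * pd2 (pd1 c l) j x y))
        (fun i j k l => by rw [hsym1]; ring)
        (fun i j k l => by rw [hsym2]; ring)
        (fun v w => by
          have h1 : ∑ i, ∑ j, ∑ k, ∑ l,
              (Rb x y i j k l - (α / 2) * (pd2 (pd1 c i) j x y * pd2 (pd1 c l) k x y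
                + pd2 (pd1 c i) k x y * pd2 (pd1 c l) j x y)) * v i * w j * w k * v l
              = (∑ i, ∑ j, ∑ k, ∑ l, Rb x y i j k l * v i * w j * w k * v l)
                - ∑ i, ∑ j, ∑ k, ∑ l, (α / 2) * (pd2 (pd1 c i) j x y * pd2 (pd1 c l) k x y
                    + pd2 (pd1 c i) k x y * pd2 (pd1 c l) j x y) * v i * w j * w k * v l := by
            simp only [sub_mul, Finset.sum_sub_distrib]
          rw [h1, hQ v w, alg_sum (fun i j => pd2 (pd1 c i) j x y) α v w, sub_self])
      exact sub_eq_zero.mp (hT i j k l)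
    · intro hfor v w
      calc ∑ i, ∑ j, ∑ k, ∑ l, Rb x y i j k l * v i * w j * w k * v l
          = ∑ i, ∑ j, ∑ k, ∑ l, (α / 2) * (pd2 (pd1 c i) j x y * pd2 (pd1 c l) k x y
              + pd2 (pd1 c i) k x y * pd2 (pd1 c l) j x y) * v i * w j * w k * v l :=
            sum4_congr _ _ (fun i j k l => by rw [hfor i j k l])
        _ = 4 * α * (-(1 / 2) * ∑ i, ∑ j, pd2 (pd1 c i) j x y * v i * w j) ^ 2 :=
            alg_sum (fun i j => pd2 (pd1 c i) j x y) α v w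
  · -- part 2
    intro p q' hp hq v w
    have hal : α ≠ 0 := ne_of_gt hα
    have hsum0 : (0:ℝ) ≤ ∑ i, p i * q' i :=
      Finset.sum_nonneg fun i _ => mul_nonneg (hp i).le (hq i).le
    have ht : 1 + α * ∑ i, p i * q' i ≠ 0 := by
      have := mul_nonneg hα.le hsum0
      intro h; linarith [this]
    have hMN : ∀ u a : Fin n,
        ∑ β, pd2 (pd1 clog u) β p q' * cloginv p q' β a = if u = a then (1:ℝ) else 0 := by
      intro u a
      have h1 : ((Matrix.of fun i j => pd2 (pd1 clog i) j p q') * cloginv p q') u a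
          = (1 : Matrix (Fin n) (Fin n) ℝ) u a := by rw [(hcloginv p q' hp hq).1]
      rw [Matrix.mul_apply] at h1
      simpa [Matrix.one_apply, Matrix.of_apply] using h1
    have collapse : ∀ (u : Fin n) (g : Fin n → ℝ),
        ∑ β, ∑ a, pd2 (pd1 clog u) β p q' * cloginv p q' β a * g a = g u := by
      intro u g
      rw [Finset.sum_comm]
      calc ∑ a, ∑ β, pd2 (pd1 clog u) β p q' * cloginv p q' β a * g a
          = ∑ a, (if u = a then (1:ℝ) else 0) * g a := by
            refine Finset.sum_congr rfl fun a _ => ?_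
            rw [← Finset.sum_mul, hMN u a]
        _ = g u := by simp [ite_mul, Finset.sum_ite_eq]
    have hB : ∀ i l β : Fin n, pd2 (pd1 (pd1 clog i) l) β p q'
        = (-α / (1 + α * ∑ i, p i * q' i))
            * (q' l * pd2 (pd1 clog i) β p q' + q' i * pd2 (pd1 clog l) β p q') := by
      intro i l β
      rw [logD4 α hal clog hclog i l β p q' ht, logD3 α hal clog hclog i β p q' ht,
          logD3 α hal clog hclog l β p q' ht]
      generalize (if i = β then (1:ℝ) else 0) = d1
      generalize (if l = β then (1:ℝ) else 0) = d2
      field_simp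
      ring
    have hsum : ∀ i l j k : Fin n,
        ∑ β, ∑ a, pd2 (pd1 (pd1 clog i) l) β p q' * cloginv p q' β a
            * pd2 (pd2 (pd1 clog a) j) k p q'
        = (-α / (1 + α * ∑ i, p i * q' i))
            * (q' l * pd2 (pd2 (pd1 clog i) j) k p q'
              + q' i * pd2 (pd2 (pd1 clog l) j) k p q') := by
      intro i l j k
      calc ∑ β, ∑ a, pd2 (pd1 (pd1 clog i) l) β p q' * cloginv p q' β a
            * pd2 (pd2 (pd1 clog a) j) k p q'
          = ∑ β, ∑ a, (-α / (1 + α * ∑ i, p i * q' i))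
              * (q' l * (pd2 (pd1 clog i) β p q' * cloginv p q' β a
                  * pd2 (pd2 (pd1 clog a) j) k p q')
                + q' i * (pd2 (pd1 clog l) β p q' * cloginv p q' β a
                  * pd2 (pd2 (pd1 clog a) j) k p q')) := by
            refine Finset.sum_congr rfl fun β _ => Finset.sum_congr rfl fun a _ => ?_
            rw [hB i l β]
            ring
        _ = (-α / (1 + α * ∑ i, p i * q' i))
            * (q' l * ∑ β, ∑ a, pd2 (pd1 clog i) β p q' * cloginv p q' β a
                  * pd2 (pd2 (pd1 clog a) j) k p q'
              + q' i * ∑ β, ∑ a, pd2 (pd1 clog l) β p q' * cloginv p q' β a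
                  * pd2 (pd2 (pd1 clog a) j) k p q') :=
            pull2 _ _ _ _ _
        _ = (-α / (1 + α * ∑ i, p i * q' i))
            * (q' l * pd2 (pd2 (pd1 clog i) j) k p q'
              + q' i * pd2 (pd2 (pd1 clog l) j) k p q') := by
            rw [collapse i (fun a => pd2 (pd2 (pd1 clog a) j) k p q'),
                collapse l (fun a => pd2 (pd2 (pd1 clog a) j) k p q')]
    have hRlogEq : ∀ i j k l : Fin n, Rblog p q' i j k l
        = (α / 2) * (pd2 (pd1 clog i) j p q' * pd2 (pd1 clog l) k p q'
            + pd2 (pd1 clog i) k p q' * pd2 (pd1 clog l) j p q') := by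
      intro i j k l
      rw [hRblog p q' i j k l, hsum i l j k,
          logD6 α hal clog hclog i l j k p q' ht,
          logD5 α hal clog hclog i j k p q' ht, logD5 α hal clog hclog l j k p q' ht,
          logD3 α hal clog hclog i j p q' ht, logD3 α hal clog hclog l k p q' ht,
          logD3 α hal clog hclog i k p q' ht, logD3 α hal clog hclog l j p q' ht]
      generalize (if i = j then (1:ℝ) else 0) = d1
      generalize (if l = j then (1:ℝ) else 0) = d2
      generalize (if i = k then (1:ℝ) else 0) = d3
      generalize (if l = k then (1:ℝ) else 0) = d4
      field_simp
      ring
    calc ∑ i, ∑ j, ∑ k, ∑ l, Rblog p q' i j k l * v i * w j * w k * v l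
        = ∑ i, ∑ j, ∑ k, ∑ l, (α / 2) * (pd2 (pd1 clog i) j p q' * pd2 (pd1 clog l) k p q'
            + pd2 (pd1 clog i) k p q' * pd2 (pd1 clog l) j p q') * v i * w j * w k * v l :=
          sum4_congr _ _ (fun i j k l => by rw [hRlogEq i j k l])
      _ = 4 * α * (-(1 / 2) * ∑ i, ∑ j, pd2 (pd1 clog i) j p q' * v i * w j) ^ 2 :=
          alg_sum (fun i j => pd2 (pd1 clog i) j p q') α v w
end
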